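/- arXiv:2108.10866 — 5 statements merged into one kernel-verified Lean document; each statement's English description precedes it below -/
import Mathlib

section
/- Let ν be a σ-finite measure on ℝ, N := {u ∈ ℝ : ∫_ℝ e^{u x} dν(x) < ∞}, and B(u) := log ∫_ℝ e^{u x} dν(x). Then B is infinitely differentiable on the interior N° of N, and for every u ∈ N° one has B'(u) = (∫_ℝ x e^{u x} dν(x)) / (∫_ℝ e^{u x} dν(x)); in particular the integrand x e^{u x} is ν-integrable for u ∈ N°. -/
open MeasureTheory Real Set

/-- The natural parameter domain of the exponential family generated by `ν`. -/
def expDom (ν : Measure ℝ) : Set ℝ :=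
  {u : ℝ | Integrable (fun x => Real.exp (u * x)) ν}

/-- The cumulant generating function `B(u) = log ∫ e^{u x} dν(x)`. -/
noncomputable def cgf (ν : Measure ℝ) (u : ℝ) : ℝ :=
  Real.log (∫ x, Real.exp (u * x) ∂ν)

/-- Key pointwise bound: `|x|^n e^{vx} ≤ (n!/δ^n)(e^{(u+2δ)x} + e^{(u-2δ)x})` for `|v-u| ≤ δ`. -/
lemma key_bound {u δ : ℝ} (hδ : 0 < δ) (n : ℕ) {v : ℝ} (hv : |v - u| ≤ δ) (x : ℝ) :
    |x| ^ n * Real.exp (v * x) ≤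
      (n.factorial / δ ^ n) * (Real.exp ((u + 2 * δ) * x) + Real.exp ((u - 2 * δ) * x)) := by
  have hδn : (0:ℝ) < δ ^ n := pow_pos hδ n
  have h1 : |x| ^ n ≤ (n.factorial / δ ^ n) * Real.exp (δ * |x|) := by
    have h := Real.pow_div_factorial_le_exp (x := δ * |x|) (mul_nonneg hδ.le (abs_nonneg x)) n
    rw [mul_pow] at h
    have hfac : (0:ℝ) < n.factorial := by positivity
    rw [div_le_iff₀ hfac] at h
    rw [div_mul_eq_mul_div, le_div_iff₀ hδn]
    nlinarith [h]
  have h2 : Real.exp (v * x) ≤ Real.exp (u * x + δ * |x|) := by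
    apply Real.exp_le_exp.2
    have hvx : (v - u) * x ≤ δ * |x| := by
      calc (v - u) * x ≤ |(v - u) * x| := le_abs_self _
        _ = |v - u| * |x| := abs_mul _ _
        _ ≤ δ * |x| := mul_le_mul_of_nonneg_right hv (abs_nonneg x)
    nlinarith [hvx]
  have h3 : Real.exp (u * x + δ * |x|) * Real.exp (δ * |x|) ≤
      Real.exp ((u + 2 * δ) * x) + Real.exp ((u - 2 * δ) * x) := by
    rw [← Real.exp_add]
    rcases le_total 0 x with hx | hx
    · rw [abs_of_nonneg hx]
      have h4 : u * x + δ * x + δ * x = (u + 2 * δ) * x := by ring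
      rw [h4]
      nlinarith [Real.exp_pos ((u - 2 * δ) * x)]
    · rw [abs_of_nonpos hx]
      have h4 : u * x + δ * -x + δ * -x = (u - 2 * δ) * x := by ring
      rw [h4]
      nlinarith [Real.exp_pos ((u + 2 * δ) * x)]
  calc |x| ^ n * Real.exp (v * x)
      ≤ ((n.factorial / δ ^ n) * Real.exp (δ * |x|)) * Real.exp (u * x + δ * |x|) :=
        mul_le_mul h1 h2 (Real.exp_pos _).le (by positivity)
    _ = (n.factorial / δ ^ n) * (Real.exp (u * x + δ * |x|) * Real.exp (δ * |x|)) := by ring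
    _ ≤ (n.factorial / δ ^ n) * (Real.exp ((u + 2 * δ) * x) + Real.exp ((u - 2 * δ) * x)) := by
        apply mul_le_mul_of_nonneg_left h3 (by positivity)

lemma mem_expDom {ν : Measure ℝ} {u : ℝ} (h : u ∈ expDom ν) :
    Integrable (fun x => Real.exp (u * x)) ν := h

lemma exists_delta {ν : Measure ℝ} {u : ℝ} (hu : u ∈ interior (expDom ν)) :
    ∃ δ : ℝ, 0 < δ ∧ (u + 2 * δ) ∈ expDom ν ∧ (u - 2 * δ) ∈ expDom ν := by
  obtain ⟨ε, hε, hball⟩ := Metric.isOpen_iff.1 isOpen_interior u hu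
  refine ⟨ε / 3, by linarith, ?_, ?_⟩
  · apply interior_subset (hball ?_)
    simp only [Metric.mem_ball, Real.dist_eq]
    rw [show u + 2 * (ε / 3) - u = 2 * (ε / 3) by ring, abs_of_pos (by linarith)]
    linarith
  · apply interior_subset (hball ?_)
    simp only [Metric.mem_ball, Real.dist_eq]
    rw [show u - 2 * (ε / 3) - u = -(2 * (ε / 3)) by ring, abs_neg, abs_of_pos (by linarith)]
    linarith

lemma integrable_bound {ν : Measure ℝ} {a b : ℝ} (ha : a ∈ expDom ν) (hb : b ∈ expDom ν)
    (c : ℝ) : Integrable (fun x => c * (Real.exp (a * x) + Real.exp (b * x))) ν :=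
  ((mem_expDom ha).add (mem_expDom hb)).const_mul c

/-- The real derivative of `M(u) = ∫ e^{ux} dν` at interior points. -/
lemma key_deriv {ν : Measure ℝ} [SigmaFinite ν] {u : ℝ} (hu : u ∈ interior (expDom ν)) :
    Integrable (fun x => x * Real.exp (u * x)) ν ∧
    HasDerivAt (fun v => ∫ x, Real.exp (v * x) ∂ν) (∫ x, x * Real.exp (u * x) ∂ν) u := by
  obtain ⟨δ, hδ, ha, hb⟩ := exists_delta hu
  have meas : ∀ v : ℝ, AEStronglyMeasurable (fun x => Real.exp (v * x)) ν := fun v =>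
    (Real.continuous_exp.comp (continuous_const.mul continuous_id)).aestronglyMeasurable
  have meas' : AEStronglyMeasurable (fun x : ℝ => x * Real.exp (u * x)) ν :=
    (continuous_id.mul (Real.continuous_exp.comp
      (continuous_const.mul continuous_id))).aestronglyMeasurable
  have hint : Integrable (fun x => Real.exp (u * x)) ν := mem_expDom (interior_subset hu)
  have := hasDerivAt_integral_of_dominated_loc_of_deriv_le (μ := ν)
    (F := fun v x => Real.exp (v * x)) (F' := fun v x => x * Real.exp (v * x))
    (bound := fun x => ((1:ℕ).factorial / δ ^ 1) *
      (Real.exp ((u + 2 * δ) * x) + Real.exp ((u - 2 * δ) * x)))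
    (x₀ := u) (Metric.ball_mem_nhds _ hδ) (Filter.Eventually.of_forall meas) hint meas' ?_
    (integrable_bound ha hb _) ?_
  · exact this
  · refine Filter.Eventually.of_forall fun x => fun v hv => ?_
    have hvu : |v - u| ≤ δ := by
      have := Metric.mem_ball.1 hv
      rw [Real.dist_eq] at this
      exact this.le
    have := key_bound hδ 1 hvu x
    simpa [abs_mul, Real.abs_exp] using this
  · refine Filter.Eventually.of_forall fun x => fun v _ => ?_
    have h1 : HasDerivAt (fun v : ℝ => v * x) x v := by
      simpa using (hasDerivAt_id v).mul_const x
    have := h1.exp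
    simpa only [mul_comm x] using this

/-- The complex moment generating function. -/
noncomputable def Mc (ν : Measure ℝ) (z : ℂ) : ℂ := ∫ x, Complex.exp (z * x) ∂ν

lemma Mc_differentiableOn (ν : Measure ℝ) [SigmaFinite ν] :
    DifferentiableOn ℂ (Mc ν) {z : ℂ | z.re ∈ interior (expDom ν)} := by
  intro z₀ hz₀
  obtain ⟨δ, hδ, ha, hb⟩ := exists_delta hz₀
  have meas : ∀ z : ℂ, AEStronglyMeasurable (fun x : ℝ => Complex.exp (z * x)) ν := fun z =>
    (Complex.continuous_exp.comp (continuous_const.mul Complex.continuous_ofReal)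
      ).aestronglyMeasurable
  have meas' : AEStronglyMeasurable (fun x : ℝ => (x : ℂ) * Complex.exp (z₀ * x)) ν :=
    (Complex.continuous_ofReal.mul (Complex.continuous_exp.comp
      (continuous_const.mul Complex.continuous_ofReal))).aestronglyMeasurable
  have hint : Integrable (fun x : ℝ => Complex.exp (z₀ * x)) ν := by
    refine Integrable.mono' (g := fun x => Real.exp (z₀.re * x)) (mem_expDom (interior_subset hz₀))
      (meas z₀) (Filter.Eventually.of_forall fun x => ?_)
    rw [Complex.norm_exp]
    simp
  have key := hasDerivAt_integral_of_dominated_loc_of_deriv_le (μ := ν)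
    (F := fun (z : ℂ) (x : ℝ) => Complex.exp (z * x))
    (F' := fun (z : ℂ) (x : ℝ) => (x : ℂ) * Complex.exp (z * x))
    (bound := fun x => ((1:ℕ).factorial / δ ^ 1) *
      (Real.exp ((z₀.re + 2 * δ) * x) + Real.exp ((z₀.re - 2 * δ) * x)))
    (x₀ := z₀) (Metric.ball_mem_nhds _ hδ) (Filter.Eventually.of_forall meas) hint meas' ?_
    (integrable_bound ha hb _) ?_
  · exact (key.2.differentiableAt).differentiableWithinAt
  · refine Filter.Eventually.of_forall fun x => fun z hz => ?_
    have hvu : |z.re - z₀.re| ≤ δ := by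
      have h1 : dist z z₀ < δ := Metric.mem_ball.1 hz
      have h2 : |(z - z₀).re| ≤ ‖z - z₀‖ := Complex.abs_re_le_norm _
      rw [Complex.dist_eq] at h1
      simp only [Complex.sub_re] at h2
      linarith
    have := key_bound hδ 1 hvu x
    rw [norm_mul, Complex.norm_exp]
    simpa [Complex.norm_real] using this
  · refine Filter.Eventually.of_forall fun x => fun z _ => ?_
    have h1 : HasDerivAt (fun z : ℂ => z * x) (x : ℂ) z := by
      simpa using (hasDerivAt_id z).mul_const (x : ℂ)
    have := h1.cexp
    simpa only [mul_comm (x : ℂ)] using this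

lemma Mc_ofReal (ν : Measure ℝ) (u : ℝ) :
    Mc ν u = ((∫ x, Real.exp (u * x) ∂ν : ℝ) : ℂ) := by
  have h : ∀ x : ℝ, Complex.exp (↑u * ↑x) = ((Real.exp (u * x) : ℝ) : ℂ) := fun x => by
    rw [← Complex.ofReal_mul, Complex.ofReal_exp]
  simp_rw [Mc, h]
  exact integral_ofReal

lemma M_pos {ν : Measure ℝ} (hν : ν ≠ 0) {u : ℝ} (hu : u ∈ expDom ν) :
    0 < ∫ x, Real.exp (u * x) ∂ν := by
  rw [integral_pos_iff_support_of_nonneg (fun x => (Real.exp_pos _).le) hu]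
  have hsup : Function.support (fun x : ℝ => Real.exp (u * x)) = univ := by
    ext x; simp [Function.mem_support, Real.exp_ne_zero]
  rw [hsup]
  exact Measure.measure_univ_pos.2 hν

/-- `B` is infinitely differentiable on the interior of `N`, and for `u ∈ N°`,
`x e^{ux}` is `ν`-integrable and `B'(u) = (∫ x e^{ux} dν)/(∫ e^{ux} dν)`. -/
theorem cgf_smooth_and_deriv (ν : Measure ℝ) [SigmaFinite ν] :
    ContDiffOn ℝ (⊤ : ℕ∞) (cgf ν) (interior (expDom ν)) ∧
    ∀ u ∈ interior (expDom ν),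
      Integrable (fun x => x * Real.exp (u * x)) ν ∧
      HasDerivAt (cgf ν)
        ((∫ x, x * Real.exp (u * x) ∂ν) / (∫ x, Real.exp (u * x) ∂ν)) u := by
  rcases eq_or_ne ν 0 with hν | hν
  · subst hν
    have hcgf : cgf (0 : Measure ℝ) = fun _ => Real.log 0 := by
      funext u; simp [cgf]
    constructor
    · rw [hcgf]; exact contDiffOn_const
    · intro u _
      refine ⟨integrable_zero_measure, ?_⟩
      simp only [integral_zero_measure, zero_div]
      rw [hcgf]
      exact hasDerivAt_const u _
  · have hopen : IsOpen (interior (expDom ν)) := isOpen_interior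
    set M : ℝ → ℝ := fun v => ∫ x, Real.exp (v * x) ∂ν with hM
    have hMpos : ∀ u ∈ interior (expDom ν), 0 < M u := fun u hu =>
      M_pos hν (interior_subset hu)
    have hSopen : IsOpen {z : ℂ | z.re ∈ interior (expDom ν)} :=
      hopen.preimage Complex.continuous_re
    have hMcAnalytic : AnalyticOnNhd ℂ (Mc ν) {z : ℂ | z.re ∈ interior (expDom ν)} :=
      (Mc_differentiableOn ν).analyticOnNhd hSopen
    have hAnalytic : AnalyticOnNhd ℝ (cgf ν) (interior (expDom ν)) := by
      intro u hu
      have hmem : (u : ℂ) ∈ {z : ℂ | z.re ∈ interior (expDom ν)} := by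
        simp only [mem_setOf_eq, Complex.ofReal_re]; exact hu
      have hA : AnalyticAt ℂ (Mc ν) (u : ℂ) := hMcAnalytic _ hmem
      have hslit : Mc ν (u : ℂ) ∈ Complex.slitPlane := by
        rw [Mc_ofReal]
        exact Complex.mem_slitPlane_iff.2 (Or.inl (by simpa using hMpos u hu))
      have hlog : AnalyticAt ℂ (fun z => Complex.log (Mc ν z)) (u : ℂ) := hA.clog hslit
      have hlogR : AnalyticAt ℝ (fun z => Complex.log (Mc ν z)) (u : ℂ) :=
        hlog.restrictScalars
      have h2 : AnalyticAt ℝ (fun v : ℝ => Complex.log (Mc ν (v : ℂ))) u :=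
        hlogR.comp (Complex.ofRealCLM.analyticAt u)
      have h3 : AnalyticAt ℝ (fun v : ℝ => (Complex.log (Mc ν (v : ℂ))).re) u :=
        (Complex.reCLM.analyticAt _).comp h2
      refine h3.congr ?_
      have : ∀ v ∈ interior (expDom ν),
          (Complex.log (Mc ν (v : ℂ))).re = cgf ν v := by
        intro v hv
        rw [Mc_ofReal, ← Complex.ofReal_log (hMpos v hv).le, Complex.ofReal_re, cgf]
      exact Filter.eventuallyEq_of_mem (hopen.mem_nhds hu) fun v hv => (this v hv)
    constructor
    · exact hAnalytic.contDiffOn_of_completeSpace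
    · intro u hu
      obtain ⟨hint, hderiv⟩ := key_deriv hu
      refine ⟨hint, ?_⟩
      have hlog := hderiv.log (ne_of_gt (hMpos u hu))
      exact hlog
end

section
/- Let ν be a σ-finite measure on ℝ whose support contains at least two points, N := {u ∈ ℝ : ∫_ℝ e^{u x} dν(x) < ∞}, B(u) := log ∫_ℝ e^{u x} dν(x), and p_u(x) := exp(u x − B(u)). Let G : ℝ → ℝ be nondecreasing with ∫_ℝ |G(x)| e^{u x} dν(x) < ∞ for every u in the interior N° of N. Then the map u ↦ ∫_ℝ G(x) p_u(x) dν(x) is nondecreasing on N°. -/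
open MeasureTheory Real Set

/-- The (topological) support of a measure: points all of whose neighbourhoods
have nonzero measure. -/
def msupport (μ : MeasureTheory.Measure ℝ) : Set ℝ :=
  {x : ℝ | ∀ U ∈ nhds x, μ U ≠ 0}

lemma mono_mul_nonneg {f g : ℝ → ℝ} (hf : Monotone f) (hg : Monotone g) (x y : ℝ) :
    0 ≤ (f x - f y) * (g x - g y) := by
  rcases le_total x y with h | h
  · nlinarith [mul_nonneg (sub_nonneg.2 (hf h)) (sub_nonneg.2 (hg h))]
  · nlinarith [mul_nonneg (sub_nonneg.2 (hf h)) (sub_nonneg.2 (hg h))]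

/-- For a nondecreasing `G` with `∫ |G| e^{ux} dν < ∞` on `N°`, the map
`u ↦ E[G(X₁) | Θ = u] = ∫ G(x) e^{ux - B(u)} dν(x)` is nondecreasing on `N°`. -/
theorem monotone_expectation (ν : Measure ℝ) [SigmaFinite ν]
    (hν : (msupport ν).Nontrivial)
    (G : ℝ → ℝ) (hG : Monotone G)
    (hGint : ∀ u ∈ interior (expDom ν),
      Integrable (fun x => |G x| * Real.exp (u * x)) ν) :
    MonotoneOn (fun u => ∫ x, G x * Real.exp (u * x - cgf ν u) ∂ν)
      (interior (expDom ν)) := by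
  -- ν is nonzero
  have hν0 : ν ≠ 0 := by
    obtain ⟨x, hx, -⟩ := hν
    intro h
    exact hx Set.univ Filter.univ_mem (by simp [h])
  intro u hu v hv huv
  have hu' : Integrable (fun x => Real.exp (u * x)) ν := (interior_subset hu : u ∈ expDom ν)
  have hv' : Integrable (fun x => Real.exp (v * x)) ν := (interior_subset hv : v ∈ expDom ν)
  have hGm : Measurable G := hG.measurable
  have hGE : ∀ w : ℝ, Integrable (fun x => |G x| * Real.exp (w * x)) ν →
      Integrable (fun x => G x * Real.exp (w * x)) ν := by
    intro w hw
    refine hw.mono' ((hGm.mul ((measurable_const.mul measurable_id).exp)).aestronglyMeasurable) ?_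
    filter_upwards with x
    rw [Real.norm_eq_abs, abs_mul, abs_of_pos (Real.exp_pos _)]
  have hGu : Integrable (fun x => G x * Real.exp (u * x)) ν := hGE u (hGint u hu)
  have hGv : Integrable (fun x => G x * Real.exp (v * x)) ν := hGE v (hGint v hv)
  have hZpos : ∀ (w : ℝ), Integrable (fun x => Real.exp (w * x)) ν →
      0 < ∫ x, Real.exp (w * x) ∂ν := by
    intro w hw
    rw [integral_pos_iff_support_of_nonneg (fun x => (Real.exp_pos _).le) hw]
    have hs : Function.support (fun x : ℝ => Real.exp (w * x)) = Set.univ := by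
      ext x; simp [Function.support, Real.exp_ne_zero]
    rw [hs]
    exact Measure.measure_univ_pos.mpr hν0
  have hZu : 0 < ∫ x, Real.exp (u * x) ∂ν := hZpos u hu'
  have hZv : 0 < ∫ x, Real.exp (v * x) ∂ν := hZpos v hv'
  set Zu := ∫ x, Real.exp (u * x) ∂ν
  set Zv := ∫ x, Real.exp (v * x) ∂ν
  set Au := ∫ x, G x * Real.exp (u * x) ∂ν
  set Av := ∫ x, G x * Real.exp (v * x) ∂ν
  -- key correlation inequality via product measure
  have hmono_exp : Monotone (fun t : ℝ => Real.exp ((v - u) * t)) :=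
    Real.exp_monotone.comp (monotone_mul_left_of_nonneg (by linarith))
  have hpt : ∀ p : ℝ × ℝ, 0 ≤ (G p.1 - G p.2) *
      (Real.exp (v * p.1) * Real.exp (u * p.2) -
       Real.exp (u * p.1) * Real.exp (v * p.2)) := by
    rintro ⟨x, y⟩
    have h1 : 0 ≤ (G x - G y) *
        (Real.exp ((v - u) * x) - Real.exp ((v - u) * y)) :=
      mono_mul_nonneg hG hmono_exp x y
    have key : Real.exp (v * x) * Real.exp (u * y) -
        Real.exp (u * x) * Real.exp (v * y) =
        (Real.exp ((v - u) * x) - Real.exp ((v - u) * y)) *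
          (Real.exp (u * x) * Real.exp (u * y)) := by
      rw [sub_mul]
      simp only [← Real.exp_add]
      rw [show (v - u) * x + (u * x + u * y) = v * x + u * y by ring,
        show (v - u) * y + (u * x + u * y) = u * x + v * y by ring]
    simp only [key]
    calc (0:ℝ) ≤ ((G x - G y) * (Real.exp ((v - u) * x) - Real.exp ((v - u) * y))) *
        (Real.exp (u * x) * Real.exp (u * y)) :=
          mul_nonneg h1 (mul_nonneg (Real.exp_pos _).le (Real.exp_pos _).le)
      _ = _ := by ring
  have t1 : Integrable (fun p : ℝ × ℝ => (G p.1 * Real.exp (v * p.1)) *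
      Real.exp (u * p.2)) (ν.prod ν) := hGv.mul_prod hu'
  have t2 : Integrable (fun p : ℝ × ℝ => (G p.1 * Real.exp (u * p.1)) *
      Real.exp (v * p.2)) (ν.prod ν) := hGu.mul_prod hv'
  have t3 : Integrable (fun p : ℝ × ℝ => Real.exp (v * p.1) *
      (G p.2 * Real.exp (u * p.2))) (ν.prod ν) := hv'.mul_prod hGu
  have t4 : Integrable (fun p : ℝ × ℝ => Real.exp (u * p.1) *
      (G p.2 * Real.exp (v * p.2))) (ν.prod ν) := hu'.mul_prod hGv
  have hFeq : (fun p : ℝ × ℝ => (G p.1 - G p.2) *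
      (Real.exp (v * p.1) * Real.exp (u * p.2) -
       Real.exp (u * p.1) * Real.exp (v * p.2))) =
      fun p : ℝ × ℝ =>
        ((G p.1 * Real.exp (v * p.1)) * Real.exp (u * p.2) -
         (G p.1 * Real.exp (u * p.1)) * Real.exp (v * p.2)) -
        (Real.exp (v * p.1) * (G p.2 * Real.exp (u * p.2)) -
         Real.exp (u * p.1) * (G p.2 * Real.exp (v * p.2))) := by
    funext p; ring
  have hIneq : 0 ≤ (Av * Zu - Au * Zv) - (Zv * Au - Zu * Av) := by
    have h0 : 0 ≤ ∫ p : ℝ × ℝ, (G p.1 - G p.2) *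
        (Real.exp (v * p.1) * Real.exp (u * p.2) -
         Real.exp (u * p.1) * Real.exp (v * p.2)) ∂(ν.prod ν) :=
      integral_nonneg hpt
    rw [hFeq] at h0
    have e12 : Integrable (fun p : ℝ × ℝ =>
        (G p.1 * Real.exp (v * p.1)) * Real.exp (u * p.2) -
        (G p.1 * Real.exp (u * p.1)) * Real.exp (v * p.2)) (ν.prod ν) := t1.sub t2
    have e34 : Integrable (fun p : ℝ × ℝ =>
        Real.exp (v * p.1) * (G p.2 * Real.exp (u * p.2)) -
        Real.exp (u * p.1) * (G p.2 * Real.exp (v * p.2))) (ν.prod ν) := t3.sub t4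
    rw [integral_sub e12 e34, integral_sub t1 t2, integral_sub t3 t4] at h0
    have p1 : ∫ p : ℝ × ℝ, (G p.1 * Real.exp (v * p.1)) * Real.exp (u * p.2) ∂(ν.prod ν)
        = Av * Zu := integral_prod_mul (fun x => G x * Real.exp (v * x)) (fun y => Real.exp (u * y))
    have p2 : ∫ p : ℝ × ℝ, (G p.1 * Real.exp (u * p.1)) * Real.exp (v * p.2) ∂(ν.prod ν)
        = Au * Zv := integral_prod_mul (fun x => G x * Real.exp (u * x)) (fun y => Real.exp (v * y))
    have p3 : ∫ p : ℝ × ℝ, Real.exp (v * p.1) * (G p.2 * Real.exp (u * p.2)) ∂(ν.prod ν)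
        = Zv * Au := integral_prod_mul (fun x => Real.exp (v * x)) (fun y => G y * Real.exp (u * y))
    have p4 : ∫ p : ℝ × ℝ, Real.exp (u * p.1) * (G p.2 * Real.exp (v * p.2)) ∂(ν.prod ν)
        = Zu * Av := integral_prod_mul (fun x => Real.exp (u * x)) (fun y => G y * Real.exp (v * y))
    linarith [h0, p1, p2, p3, p4]
  -- rewrite the goal
  have hrw : ∀ (w : ℝ), 0 < ∫ x, Real.exp (w * x) ∂ν →
      (∫ x, G x * Real.exp (w * x - cgf ν w) ∂ν) =
      (∫ x, G x * Real.exp (w * x) ∂ν) / (∫ x, Real.exp (w * x) ∂ν) := by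
    intro w hw
    rw [← integral_div]
    congr 1; funext x
    rw [cgf, Real.exp_sub, Real.exp_log hw, mul_div_assoc]
  simp only [hrw u hZu, hrw v hZv]
  rw [div_le_div_iff₀ hZu hZv]
  nlinarith [hIneq]
end

section
/- For every n ∈ ℕ and y ∈ ℝ, the function y ↦ q(n,y) is differentiable, with ∂q/∂y(n,y) = ∫_{(θ₀,∞)} u dμ_{n,y}(u) − μ_{n,y}((θ₀,∞)) · ∫_ℝ u dμ_{n,y}(u), and this quantity is strictly positive; in particular y ↦ q(n,y) is strictly increasing. -/
open MeasureTheory Real Set Filter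
open scoped ENNReal

/-- The normalizing constant `Z(n,y) = ∫ e^{uy - nB(u)} dμ(u)`. -/
noncomputable def Z (ν μ : Measure ℝ) (n : ℕ) (y : ℝ) : ℝ :=
  ∫ u, Real.exp (u * y - (n : ℝ) * cgf ν u) ∂μ

/-- The posterior probability `q(n,y) = P(Θ > θ₀ | Y_n = y)`. -/
noncomputable def q (ν μ : Measure ℝ) (θ₀ : ℝ) (n : ℕ) (y : ℝ) : ℝ :=
  (∫ u in Set.Ioi θ₀, Real.exp (u * y - (n : ℝ) * cgf ν u) ∂μ) / Z ν μ n y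

/-- The posterior distribution `μ_{n,y}(du) = e^{uy - nB(u)} μ(du) / Z(n,y)`. -/
noncomputable def post (ν μ : Measure ℝ) (n : ℕ) (y : ℝ) : Measure ℝ :=
  (ENNReal.ofReal (Z ν μ n y))⁻¹ •
    μ.withDensity (fun u => ENNReal.ofReal (Real.exp (u * y - (n : ℝ) * cgf ν u)))

/-- The one-step transition operator: `(T_n f)(p) = E_{n,p}[f(Π_{n+1})]`, where
`Y n p` is the point on the `p`-level curve at time `n`. -/
noncomputable def T (ν μ : Measure ℝ) (θ₀ : ℝ) (Y : ℕ → ℝ → ℝ) (n : ℕ)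
    (f : ℝ → ℝ) (p : ℝ) : ℝ :=
  ∫ x, f (q ν μ θ₀ (n + 1) (Y n p + x)) *
      (Z ν μ (n + 1) (Y n p + x) / Z ν μ n (Y n p)) ∂ν

/-- The finite-horizon value functions `W k n p`. -/
noncomputable def W (ν μ : Measure ℝ) (θ₀ : ℝ) (Y : ℕ → ℝ → ℝ) (c : ℝ) :
    ℕ → ℕ → ℝ → ℝ
  | 0, _, p => min p (1 - p)
  | k + 1, n, p =>
      min (min p (1 - p)) (c + T ν μ θ₀ Y n (W ν μ θ₀ Y c k (n + 1)) p)

/-- The value function `V(n,p) = lim_k W_k(n,p) = ⨅ k, W_k(n,p)`. -/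
noncomputable def Vfun (ν μ : Measure ℝ) (θ₀ : ℝ) (Y : ℕ → ℝ → ℝ) (c : ℝ)
    (n : ℕ) (p : ℝ) : ℝ :=
  ⨅ k : ℕ, W ν μ θ₀ Y c k n p


private lemma cgf_measurable (ν : Measure ℝ) [SigmaFinite ν] : Measurable (cgf ν) := by
  have h : StronglyMeasurable fun u : ℝ => ∫ x, Real.exp (u * x) ∂ν := by
    have h2 : StronglyMeasurable fun p : ℝ × ℝ => Real.exp (p.1 * p.2) :=
      ((measurable_fst.mul measurable_snd).exp).stronglyMeasurable
    exact h2.integral_prod_right'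
  exact Real.measurable_log.comp h.measurable

private lemma g_measurable (ν : Measure ℝ) [SigmaFinite ν] (n : ℕ) (y : ℝ) :
    Measurable fun u : ℝ => Real.exp (u * y - (n : ℝ) * cgf ν u) :=
  ((measurable_id.mul_const y).sub ((cgf_measurable ν).const_mul _)).exp

private lemma integrable_g (ν μ : Measure ℝ) [SigmaFinite ν]
    (hint : ∀ (n : ℕ) (y : ℝ),
      Integrable (fun u => (1 + |u|) * Real.exp (u * y - (n : ℝ) * cgf ν u)) μ)
    (n : ℕ) (y : ℝ) :
    Integrable (fun u : ℝ => Real.exp (u * y - (n : ℝ) * cgf ν u)) μ := by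
  refine (hint n y).mono' (g_measurable ν n y).aestronglyMeasurable
    (Filter.Eventually.of_forall fun u => ?_)
  rw [Real.norm_eq_abs, Real.abs_exp]
  nlinarith [abs_nonneg u, Real.exp_pos (u * y - (n : ℝ) * cgf ν u)]

private lemma integrable_ug (ν μ : Measure ℝ) [SigmaFinite ν]
    (hint : ∀ (n : ℕ) (y : ℝ),
      Integrable (fun u => (1 + |u|) * Real.exp (u * y - (n : ℝ) * cgf ν u)) μ)
    (n : ℕ) (y : ℝ) :
    Integrable (fun u : ℝ => u * Real.exp (u * y - (n : ℝ) * cgf ν u)) μ := by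
  refine (hint n y).mono' (measurable_id.mul (g_measurable ν n y)).aestronglyMeasurable
    (Filter.Eventually.of_forall fun u => ?_)
  rw [Real.norm_eq_abs, abs_mul, Real.abs_exp]
  nlinarith [abs_nonneg u, Real.exp_pos (u * y - (n : ℝ) * cgf ν u)]

private lemma hasDerivAt_setIntegral (ν μ : Measure ℝ) [SigmaFinite ν]
    (hint : ∀ (n : ℕ) (y : ℝ),
      Integrable (fun u => (1 + |u|) * Real.exp (u * y - (n : ℝ) * cgf ν u)) μ)
    (n : ℕ) (y : ℝ) (s : Set ℝ) :
    HasDerivAt (fun t => ∫ u in s, Real.exp (u * t - (n : ℝ) * cgf ν u) ∂μ)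
      (∫ u in s, u * Real.exp (u * y - (n : ℝ) * cgf ν u) ∂μ) y := by
  have key := hasDerivAt_integral_of_dominated_loc_of_deriv_le
    (μ := μ.restrict s) (x₀ := y) (s := Metric.ball y 1)
    (F := fun t u => Real.exp (u * t - (n : ℝ) * cgf ν u))
    (F' := fun t u => u * Real.exp (u * t - (n : ℝ) * cgf ν u))
    (bound := fun u => (1 + |u|) * Real.exp (u * (y - 1) - (n : ℝ) * cgf ν u)
      + (1 + |u|) * Real.exp (u * (y + 1) - (n : ℝ) * cgf ν u))
    (Metric.ball_mem_nhds y one_pos)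
    (Filter.Eventually.of_forall fun t =>
      ((g_measurable ν n t).aestronglyMeasurable.restrict))
    ((integrable_g ν μ hint n y).restrict)
    ((measurable_id.mul (g_measurable ν n y)).aestronglyMeasurable.restrict)
    ?_ (((hint n (y - 1)).add (hint n (y + 1))).restrict) ?_
  · exact key.2
  · refine Filter.Eventually.of_forall fun u t ht => ?_
    have ht' : |t - y| < 1 := by
      rw [Metric.mem_ball, Real.dist_eq] at ht; exact ht
    have habs := abs_lt.1 ht'
    have hle : Real.exp (u * t - (n : ℝ) * cgf ν u)
        ≤ Real.exp (u * (y - 1) - (n : ℝ) * cgf ν u)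
          + Real.exp (u * (y + 1) - (n : ℝ) * cgf ν u) := by
      rcases le_total 0 u with hu | hu
      · have h2 : u * t ≤ u * (y + 1) := by nlinarith
        have := Real.exp_le_exp.2 (show u * t - (n : ℝ) * cgf ν u
          ≤ u * (y + 1) - (n : ℝ) * cgf ν u by linarith)
        linarith [Real.exp_pos (u * (y - 1) - (n : ℝ) * cgf ν u)]
      · have h2 : u * t ≤ u * (y - 1) := by nlinarith
        have := Real.exp_le_exp.2 (show u * t - (n : ℝ) * cgf ν u
          ≤ u * (y - 1) - (n : ℝ) * cgf ν u by linarith)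
        linarith [Real.exp_pos (u * (y + 1) - (n : ℝ) * cgf ν u)]
    rw [Real.norm_eq_abs, abs_mul, Real.abs_exp]
    have h3 : |u| ≤ 1 + |u| := by linarith [abs_nonneg u]
    calc |u| * Real.exp (u * t - (n : ℝ) * cgf ν u)
        ≤ (1 + |u|) * (Real.exp (u * (y - 1) - (n : ℝ) * cgf ν u)
          + Real.exp (u * (y + 1) - (n : ℝ) * cgf ν u)) := by
          apply mul_le_mul h3 hle (Real.exp_pos _).le (by positivity)
      _ = _ := by ring
  · refine Filter.Eventually.of_forall fun u t _ => ?_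
    have h1 : HasDerivAt (fun t : ℝ => u * t - (n : ℝ) * cgf ν u) u t := by
      simpa using ((hasDerivAt_id t).const_mul u).sub_const ((n : ℝ) * cgf ν u)
    simpa [mul_comm] using h1.exp

private lemma post_setIntegral (ν μ : Measure ℝ) [SigmaFinite ν]
    (n : ℕ) (y : ℝ) (f : ℝ → ℝ) (s : Set ℝ) (hs : MeasurableSet s)
    (hZ : 0 ≤ Z ν μ n y) :
    ∫ u in s, f u ∂(post ν μ n y) =
      (∫ u in s, f u * Real.exp (u * y - (n : ℝ) * cgf ν u) ∂μ) / Z ν μ n y := by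
  rw [post, Measure.restrict_smul, integral_smul_measure,
    MeasureTheory.restrict_withDensity hs]
  have hmeas : Measurable fun u : ℝ =>
      (Real.exp (u * y - (n : ℝ) * cgf ν u)).toNNReal :=
    (g_measurable ν n y).real_toNNReal
  rw [show (fun u : ℝ => ENNReal.ofReal (Real.exp (u * y - (n : ℝ) * cgf ν u)))
      = fun u : ℝ => ((Real.exp (u * y - (n : ℝ) * cgf ν u)).toNNReal : ℝ≥0∞) from rfl]
  rw [integral_withDensity_eq_integral_smul hmeas]
  have : ∀ u : ℝ, (Real.exp (u * y - (n : ℝ) * cgf ν u)).toNNReal • f u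
      = f u * Real.exp (u * y - (n : ℝ) * cgf ν u) := by
    intro u
    rw [NNReal.smul_def, Real.coe_toNNReal _ (Real.exp_pos _).le, smul_eq_mul, mul_comm]
  simp_rw [this]
  rw [ENNReal.toReal_inv, ENNReal.toReal_ofReal hZ, smul_eq_mul, inv_mul_eq_div]

private lemma q_key (ν μ : Measure ℝ) [SigmaFinite ν]
    [IsProbabilityMeasure μ] (θ₀ : ℝ)
    (h0 : 0 < μ (Set.Ioi θ₀)) (h1 : μ (Set.Ioi θ₀) < 1)
    (hint : ∀ (n : ℕ) (y : ℝ),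
      Integrable (fun u => (1 + |u|) * Real.exp (u * y - (n : ℝ) * cgf ν u)) μ)
    (n : ℕ) (y : ℝ) :
    HasDerivAt (q ν μ θ₀ n)
      ((∫ u in Set.Ioi θ₀, u ∂(post ν μ n y)) -
        (post ν μ n y (Set.Ioi θ₀)).toReal * ∫ u, u ∂(post ν μ n y)) y ∧
    0 < (∫ u in Set.Ioi θ₀, u ∂(post ν μ n y)) -
        (post ν μ n y (Set.Ioi θ₀)).toReal * ∫ u, u ∂(post ν μ n y) := by
  have hZpos : ∀ t, 0 < Z ν μ n t := fun t =>
    integral_exp_pos (integrable_g ν μ hint n t)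
  -- basic positivity of the restricted measures
  haveI hne1 : NeZero (μ.restrict (Set.Ioi θ₀)) :=
    ⟨Measure.measure_univ_ne_zero.mp
      (by rw [Measure.restrict_apply_univ]; exact h0.ne')⟩
  have hcne : μ (Set.Ioi θ₀)ᶜ ≠ 0 := by
    rw [measure_compl measurableSet_Ioi (measure_ne_top μ _)]
    simp only [measure_univ]
    intro h
    exact absurd (tsub_eq_zero_iff_le.mp h) (not_le.mpr h1)
  haveI hne2 : NeZero (μ.restrict (Set.Ioi θ₀)ᶜ) :=
    ⟨Measure.measure_univ_ne_zero.mp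
      (by rw [Measure.restrict_apply_univ]; exact hcne)⟩
  have hApos : 0 < ∫ u in Set.Ioi θ₀, Real.exp (u * y - (n : ℝ) * cgf ν u) ∂μ :=
    integral_exp_pos ((integrable_g ν μ hint n y).restrict)
  have hAcpos : 0 < ∫ u in (Set.Ioi θ₀)ᶜ, Real.exp (u * y - (n : ℝ) * cgf ν u) ∂μ :=
    integral_exp_pos ((integrable_g ν μ hint n y).restrict)
  have hZsplit : (∫ u in Set.Ioi θ₀, Real.exp (u * y - (n : ℝ) * cgf ν u) ∂μ)
      + ∫ u in (Set.Ioi θ₀)ᶜ, Real.exp (u * y - (n : ℝ) * cgf ν u) ∂μ = Z ν μ n y :=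
    integral_add_compl measurableSet_Ioi (integrable_g ν μ hint n y)
  have hIsplit : (∫ u in Set.Ioi θ₀, u * Real.exp (u * y - (n : ℝ) * cgf ν u) ∂μ)
      + ∫ u in (Set.Ioi θ₀)ᶜ, u * Real.exp (u * y - (n : ℝ) * cgf ν u) ∂μ
      = ∫ u, u * Real.exp (u * y - (n : ℝ) * cgf ν u) ∂μ :=
    integral_add_compl measurableSet_Ioi (integrable_ug ν μ hint n y)
  -- strict inequality on the Ioi part
  have hsub_int : ∫ u in Set.Ioi θ₀, (u - θ₀) * Real.exp (u * y - (n : ℝ) * cgf ν u) ∂μ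
      = (∫ u in Set.Ioi θ₀, u * Real.exp (u * y - (n : ℝ) * cgf ν u) ∂μ)
        - θ₀ * ∫ u in Set.Ioi θ₀, Real.exp (u * y - (n : ℝ) * cgf ν u) ∂μ := by
    rw [← integral_const_mul, ← integral_sub ((integrable_ug ν μ hint n y).restrict)
      (((integrable_g ν μ hint n y).restrict).const_mul θ₀)]
    congr 1 with u
    ring
  have hS : θ₀ * (∫ u in Set.Ioi θ₀, Real.exp (u * y - (n : ℝ) * cgf ν u) ∂μ)
      < ∫ u in Set.Ioi θ₀, u * Real.exp (u * y - (n : ℝ) * cgf ν u) ∂μ := by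
    have hpos : 0 < ∫ u in Set.Ioi θ₀,
        (u - θ₀) * Real.exp (u * y - (n : ℝ) * cgf ν u) ∂μ := by
      have hae : 0 ≤ᵐ[μ.restrict (Set.Ioi θ₀)]
          fun u => (u - θ₀) * Real.exp (u * y - (n : ℝ) * cgf ν u) := by
        rw [EventuallyLE, ae_restrict_iff' measurableSet_Ioi]
        refine Filter.Eventually.of_forall fun u hu => ?_
        have : (0:ℝ) < u - θ₀ := sub_pos.2 hu
        positivity
      have hfi : Integrable
          (fun u => (u - θ₀) * Real.exp (u * y - (n : ℝ) * cgf ν u))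
          (μ.restrict (Set.Ioi θ₀)) := by
        have := ((integrable_ug ν μ hint n y).restrict
          (s := Set.Ioi θ₀)).sub (((integrable_g ν μ hint n y).restrict
          (s := Set.Ioi θ₀)).const_mul θ₀)
        refine this.congr (Filter.Eventually.of_forall fun u => ?_)
        simp only [Pi.sub_apply]
        ring
      rw [integral_pos_iff_support_of_nonneg_ae hae hfi]
      refine lt_of_lt_of_le (b := (μ.restrict (Set.Ioi θ₀)) (Set.Ioi θ₀)) ?_ (measure_mono ?_)
      · rwa [Measure.restrict_apply_self]
      · intro u hu
        have h1 : (0:ℝ) < u - θ₀ := sub_pos.2 hu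
        have := Real.exp_pos (u * y - (n : ℝ) * cgf ν u)
        simp only [Function.mem_support]
        positivity
    rw [hsub_int] at hpos
    linarith
  -- the complement part
  have hIc : (∫ u in (Set.Ioi θ₀)ᶜ, u * Real.exp (u * y - (n : ℝ) * cgf ν u) ∂μ)
      ≤ θ₀ * ∫ u in (Set.Ioi θ₀)ᶜ, Real.exp (u * y - (n : ℝ) * cgf ν u) ∂μ := by
    have hnn : 0 ≤ ∫ u in (Set.Ioi θ₀)ᶜ,
        (θ₀ - u) * Real.exp (u * y - (n : ℝ) * cgf ν u) ∂μ := by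
      refine setIntegral_nonneg measurableSet_Ioi.compl fun u hu => ?_
      have hu' : u ≤ θ₀ := not_lt.mp hu
      have : (0:ℝ) ≤ θ₀ - u := by linarith
      positivity
    have heq : ∫ u in (Set.Ioi θ₀)ᶜ,
        (θ₀ - u) * Real.exp (u * y - (n : ℝ) * cgf ν u) ∂μ
        = θ₀ * (∫ u in (Set.Ioi θ₀)ᶜ, Real.exp (u * y - (n : ℝ) * cgf ν u) ∂μ)
          - ∫ u in (Set.Ioi θ₀)ᶜ, u * Real.exp (u * y - (n : ℝ) * cgf ν u) ∂μ := by
      rw [← integral_const_mul, ← integral_sub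
        (((integrable_g ν μ hint n y).restrict).const_mul θ₀)
        ((integrable_ug ν μ hint n y).restrict)]
      congr 1 with u
      ring
    rw [heq] at hnn
    linarith
  -- rewrite the posterior quantities
  have e1 : ∫ u in Set.Ioi θ₀, u ∂(post ν μ n y)
      = (∫ u in Set.Ioi θ₀, u * Real.exp (u * y - (n : ℝ) * cgf ν u) ∂μ) / Z ν μ n y :=
    post_setIntegral ν μ n y (fun u => u) _ measurableSet_Ioi (hZpos y).le
  have e2 : ∫ u, u ∂(post ν μ n y)
      = (∫ u, u * Real.exp (u * y - (n : ℝ) * cgf ν u) ∂μ) / Z ν μ n y := by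
    have := post_setIntegral ν μ n y (fun u => u) Set.univ MeasurableSet.univ (hZpos y).le
    rwa [setIntegral_univ, setIntegral_univ] at this
  have e3 : ((post ν μ n y) (Set.Ioi θ₀)).toReal
      = (∫ u in Set.Ioi θ₀, Real.exp (u * y - (n : ℝ) * cgf ν u) ∂μ) / Z ν μ n y := by
    have := post_setIntegral ν μ n y (fun _ => (1:ℝ)) (Set.Ioi θ₀) measurableSet_Ioi (hZpos y).le
    rw [← measureReal_def]
    simpa [setIntegral_const] using this
  rw [e1, e2, e3]
  -- derivative
  have hA' : HasDerivAt (fun t => ∫ u in Set.Ioi θ₀,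
        Real.exp (u * t - (n : ℝ) * cgf ν u) ∂μ)
      (∫ u in Set.Ioi θ₀, u * Real.exp (u * y - (n : ℝ) * cgf ν u) ∂μ) y :=
    hasDerivAt_setIntegral ν μ hint n y _
  have hZ' : HasDerivAt (Z ν μ n)
      (∫ u, u * Real.exp (u * y - (n : ℝ) * cgf ν u) ∂μ) y := by
    have := hasDerivAt_setIntegral ν μ hint n y Set.univ
    simp only [Measure.restrict_univ, setIntegral_univ] at this
    exact this
  have hEeq : (∫ u in Set.Ioi θ₀, u * Real.exp (u * y - (n : ℝ) * cgf ν u) ∂μ) / Z ν μ n y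
      - (∫ u in Set.Ioi θ₀, Real.exp (u * y - (n : ℝ) * cgf ν u) ∂μ) / Z ν μ n y
        * ((∫ u, u * Real.exp (u * y - (n : ℝ) * cgf ν u) ∂μ) / Z ν μ n y)
      = ((∫ u in Set.Ioi θ₀, u * Real.exp (u * y - (n : ℝ) * cgf ν u) ∂μ) * Z ν μ n y
        - (∫ u in Set.Ioi θ₀, Real.exp (u * y - (n : ℝ) * cgf ν u) ∂μ)
          * ∫ u, u * Real.exp (u * y - (n : ℝ) * cgf ν u) ∂μ) / (Z ν μ n y) ^ 2 := by
    have hZne : Z ν μ n y ≠ 0 := (hZpos y).ne'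
    generalize ∫ u in Set.Ioi θ₀, u * Real.exp (u * y - (n : ℝ) * cgf ν u) ∂μ = A
    generalize ∫ u in Set.Ioi θ₀, Real.exp (u * y - (n : ℝ) * cgf ν u) ∂μ = B
    generalize ∫ u, u * Real.exp (u * y - (n : ℝ) * cgf ν u) ∂μ = C
    field_simp
  constructor
  · rw [hEeq]
    exact hA'.div hZ' (hZpos y).ne'
  · rw [hEeq]
    refine div_pos ?_ (pow_pos (hZpos y) 2)
    have h6 : (∫ u in Set.Ioi θ₀, u * Real.exp (u * y - (n : ℝ) * cgf ν u) ∂μ) * Z ν μ n y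
        - (∫ u in Set.Ioi θ₀, Real.exp (u * y - (n : ℝ) * cgf ν u) ∂μ)
          * ∫ u, u * Real.exp (u * y - (n : ℝ) * cgf ν u) ∂μ
        = (∫ u in (Set.Ioi θ₀)ᶜ, Real.exp (u * y - (n : ℝ) * cgf ν u) ∂μ)
            * ((∫ u in Set.Ioi θ₀, u * Real.exp (u * y - (n : ℝ) * cgf ν u) ∂μ)
              - θ₀ * ∫ u in Set.Ioi θ₀, Real.exp (u * y - (n : ℝ) * cgf ν u) ∂μ)
          + (∫ u in Set.Ioi θ₀, Real.exp (u * y - (n : ℝ) * cgf ν u) ∂μ)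
            * (θ₀ * (∫ u in (Set.Ioi θ₀)ᶜ, Real.exp (u * y - (n : ℝ) * cgf ν u) ∂μ)
              - ∫ u in (Set.Ioi θ₀)ᶜ, u * Real.exp (u * y - (n : ℝ) * cgf ν u) ∂μ) := by
      rw [← hZsplit, ← hIsplit]
      ring
    rw [h6]
    have t1 := mul_pos hAcpos (sub_pos.2 hS)
    have t2 := mul_nonneg hApos.le (sub_nonneg.2 hIc)
    linarith


/-- `y ↦ q(n,y)` is differentiable with derivative given by the covariance of
`Θ` and `1_{Θ>θ₀}` under the posterior `μ_{n,y}`; this covariance is strictly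
positive, and `q(n,·)` is strictly increasing. -/
theorem q_hasDerivAt_and_strictMono (ν μ : Measure ℝ) [SigmaFinite ν]
    [IsProbabilityMeasure μ] (θ₀ : ℝ)
    (hsupp : msupport μ ⊆ interior (expDom ν))
    (h0 : 0 < μ (Set.Ioi θ₀)) (h1 : μ (Set.Ioi θ₀) < 1)
    (hint : ∀ (n : ℕ) (y : ℝ),
      Integrable (fun u => (1 + |u|) * Real.exp (u * y - (n : ℝ) * cgf ν u)) μ)
    (n : ℕ) (y : ℝ) :
    HasDerivAt (q ν μ θ₀ n)
      ((∫ u in Set.Ioi θ₀, u ∂(post ν μ n y)) -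
        (post ν μ n y (Set.Ioi θ₀)).toReal * ∫ u, u ∂(post ν μ n y)) y ∧
    0 < (∫ u in Set.Ioi θ₀, u ∂(post ν μ n y)) -
        (post ν μ n y (Set.Ioi θ₀)).toReal * ∫ u, u ∂(post ν μ n y) ∧
    StrictMono (q ν μ θ₀ n) := by
  obtain ⟨hd, hp⟩ := q_key ν μ θ₀ h0 h1 hint n y
  refine ⟨hd, hp, strictMono_of_deriv_pos fun x => ?_⟩
  obtain ⟨hd', hp'⟩ := q_key ν μ θ₀ h0 h1 hint n x
  rw [hd'.deriv]
  exact hp'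
end

section
/- The value function satisfies the dynamic programming equation: for every n ∈ ℕ and π ∈ (0,1), V(n,π) = min( min(π, 1−π), c + (T_n V(n+1,·))(π) ). -/
open MeasureTheory Real Set Filter
open Topology

set_option linter.unusedSectionVars false
set_option maxHeartbeats 1000000

section DPPAux
variable (ν μ : Measure ℝ) [SigmaFinite ν] [IsProbabilityMeasure μ] (θ₀ : ℝ)
variable (hint : ∀ (n : ℕ) (y : ℝ),
      Integrable (fun u => (1 + |u|) * Real.exp (u * y - (n : ℝ) * cgf ν u)) μ)

lemma measurable_cgf : Measurable (cgf ν) := by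
  have h : StronglyMeasurable (fun p : ℝ × ℝ => Real.exp (p.1 * p.2)) :=
    ((continuous_fst.mul continuous_snd).rexp).stronglyMeasurable
  exact (h.integral_prod_right').measurable.log

lemma measurable_kern (n : ℕ) :
    Measurable (fun p : ℝ × ℝ => Real.exp (p.2 * p.1 - (n : ℝ) * cgf ν p.2)) := by
  exact ((measurable_snd.mul measurable_fst).sub
    (measurable_const.mul ((measurable_cgf ν).comp measurable_snd))).exp

lemma measurable_E (n : ℕ) (y : ℝ) :
    Measurable (fun u : ℝ => Real.exp (u * y - (n : ℝ) * cgf ν u)) := by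
  exact ((measurable_id.mul_const y).sub (measurable_const.mul (measurable_cgf ν))).exp

lemma measurable_Z (n : ℕ) : Measurable (Z ν μ n) :=
  (((measurable_kern ν n).stronglyMeasurable).integral_prod_right').measurable

lemma measurable_Num (n : ℕ) :
    Measurable (fun y => ∫ u in Set.Ioi θ₀, Real.exp (u * y - (n : ℝ) * cgf ν u) ∂μ) :=
  (((measurable_kern ν n).stronglyMeasurable).integral_prod_right'
    (ν := μ.restrict (Set.Ioi θ₀))).measurable

lemma measurable_q (n : ℕ) : Measurable (q ν μ θ₀ n) :=
  (measurable_Num ν μ θ₀ n).div (measurable_Z ν μ n)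

include hint in
lemma integrable_E (n : ℕ) (y : ℝ) :
    Integrable (fun u : ℝ => Real.exp (u * y - (n : ℝ) * cgf ν u)) μ := by
  refine (hint n y).mono' (measurable_E ν n y).aestronglyMeasurable ?_
  filter_upwards with u
  rw [Real.norm_eq_abs, abs_of_nonneg (Real.exp_pos _).le]
  nlinarith [Real.exp_pos (u * y - (n : ℝ) * cgf ν u), abs_nonneg u]

include hint in
lemma Z_pos (n : ℕ) (y : ℝ) : 0 < Z ν μ n y := by
  rw [Z, integral_pos_iff_support_of_nonneg (fun u => (Real.exp_pos _).le)
    (integrable_E ν μ hint n y)]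
  have : (Function.support fun u : ℝ => Real.exp (u * y - (n : ℝ) * cgf ν u)) = Set.univ := by
    ext u; simp [Function.support, (Real.exp_pos _).ne']
  rw [this]; simp

variable (h0 : 0 < μ (Set.Ioi θ₀)) (h1 : μ (Set.Ioi θ₀) < 1)

include hint in
lemma Num_pos (h0 : 0 < μ (Set.Ioi θ₀)) (n : ℕ) (y : ℝ) :
    0 < ∫ u in Set.Ioi θ₀, Real.exp (u * y - (n : ℝ) * cgf ν u) ∂μ := by
  rw [setIntegral_pos_iff_support_of_nonneg_ae
    (Filter.Eventually.of_forall (fun u => (Real.exp_pos _).le))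
    ((integrable_E ν μ hint n y).integrableOn)]
  have : (Function.support fun u : ℝ => Real.exp (u * y - (n : ℝ) * cgf ν u)) ∩ Set.Ioi θ₀
      = Set.Ioi θ₀ := by
    refine Set.inter_eq_self_of_subset_right fun u _ => ?_
    simp [Function.support, (Real.exp_pos _).ne']
  rw [this]; exact h0

omit hint in
lemma Iic_pos (h1 : μ (Set.Ioi θ₀) < 1) : 0 < μ (Set.Iic θ₀) := by
  by_contra h
  push_neg at h
  have h2 : μ (Set.Iic θ₀) = 0 := le_antisymm h zero_le
  have : (1 : ENNReal) ≤ μ (Set.Ioi θ₀) + μ (Set.Iic θ₀) := by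
    have := measure_union_le (μ := μ) (Set.Ioi θ₀) (Set.Iic θ₀)
    rwa [Set.union_comm, Set.Iic_union_Ioi, measure_univ] at this
  rw [h2, add_zero] at this
  exact absurd this (not_le.mpr h1)

include hint in
lemma Num_lt_Z (h1 : μ (Set.Ioi θ₀) < 1) (n : ℕ) (y : ℝ) :
    (∫ u in Set.Ioi θ₀, Real.exp (u * y - (n : ℝ) * cgf ν u) ∂μ) < Z ν μ n y := by
  have hsplit := integral_add_compl (measurableSet_Ioi (a := θ₀)) (integrable_E ν μ hint n y)
  rw [Set.compl_Ioi] at hsplit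
  have hpos : 0 < ∫ u in Set.Iic θ₀, Real.exp (u * y - (n : ℝ) * cgf ν u) ∂μ := by
    rw [setIntegral_pos_iff_support_of_nonneg_ae
      (Filter.Eventually.of_forall (fun u => (Real.exp_pos _).le))
      ((integrable_E ν μ hint n y).integrableOn)]
    have : (Function.support fun u : ℝ => Real.exp (u * y - (n : ℝ) * cgf ν u)) ∩ Set.Iic θ₀
        = Set.Iic θ₀ := by
      refine Set.inter_eq_self_of_subset_right fun u _ => ?_
      simp [Function.support, (Real.exp_pos _).ne']
    rw [this]; exact Iic_pos μ θ₀ h1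
  rw [Z, ← hsplit]; linarith

include hint in
lemma q_mem_Ioo (h0 : 0 < μ (Set.Ioi θ₀)) (h1 : μ (Set.Ioi θ₀) < 1) (n : ℕ) (y : ℝ) : q ν μ θ₀ n y ∈ Set.Ioo (0:ℝ) 1 := by
  have hZ := Z_pos ν μ hint n y
  constructor
  · exact div_pos (Num_pos ν μ θ₀ hint h0 n y) hZ
  · rw [q, div_lt_one hZ]; exact Num_lt_Z ν μ θ₀ hint h1 n y

include hint in
lemma q_strictMono
    (h0 : 0 < μ (Set.Ioi θ₀)) (h1 : μ (Set.Ioi θ₀) < 1) (n : ℕ) :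
    StrictMono (q ν μ θ₀ n) := by
  intro y1 y2 hy
  set E : ℝ → ℝ → ℝ := fun y u => Real.exp (u * y - (n : ℝ) * cgf ν u) with hE
  set N : ℝ → ℝ := fun y => ∫ u in Set.Ioi θ₀, E y u ∂μ with hN
  set M : ℝ → ℝ := fun y => ∫ u in Set.Iic θ₀, E y u ∂μ with hM
  have hZsplit : ∀ y, Z ν μ n y = N y + M y := by
    intro y
    have := integral_add_compl (measurableSet_Ioi (a := θ₀)) (integrable_E ν μ hint n y)
    rw [Set.compl_Ioi] at this
    rw [Z, ← this]
  -- positivity of N, M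
  have hNpos : ∀ y, 0 < N y := by
    intro y
    rw [hN, setIntegral_pos_iff_support_of_nonneg_ae
      (Filter.Eventually.of_forall (fun u => (Real.exp_pos _).le))
      ((integrable_E ν μ hint n y).integrableOn)]
    have : (Function.support (E y)) ∩ Set.Ioi θ₀ = Set.Ioi θ₀ :=
      Set.inter_eq_self_of_subset_right fun u _ => by
        simp [hE, Function.support, (Real.exp_pos _).ne']
    rw [this]; exact h0
  have hMpos : ∀ y, 0 < M y := by
    intro y
    rw [hM, setIntegral_pos_iff_support_of_nonneg_ae
      (Filter.Eventually.of_forall (fun u => (Real.exp_pos _).le))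
      ((integrable_E ν μ hint n y).integrableOn)]
    have : (Function.support (E y)) ∩ Set.Iic θ₀ = Set.Iic θ₀ :=
      Set.inter_eq_self_of_subset_right fun u _ => by
        simp [hE, Function.support, (Real.exp_pos _).ne']
    rw [this]; exact Iic_pos μ θ₀ h1
  -- key inequality N y1 * M y2 < N y2 * M y1
  have hkey : N y1 * M y2 < N y2 * M y1 := by
    have hprod1 : N y1 * M y2
        = ∫ z in (Set.Ioi θ₀) ×ˢ (Set.Iic θ₀), E y1 z.1 * E y2 z.2 ∂(μ.prod μ) := by
      rw [MeasureTheory.setIntegral_prod_mul]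
    have hprod2 : N y2 * M y1
        = ∫ z in (Set.Ioi θ₀) ×ˢ (Set.Iic θ₀), E y2 z.1 * E y1 z.2 ∂(μ.prod μ) := by
      rw [MeasureTheory.setIntegral_prod_mul]
    rw [hprod1, hprod2]
    have hi1 : IntegrableOn (fun z : ℝ × ℝ => E y1 z.1 * E y2 z.2)
        ((Set.Ioi θ₀) ×ˢ (Set.Iic θ₀)) (μ.prod μ) :=
      ((integrable_E ν μ hint n y1).mul_prod (integrable_E ν μ hint n y2)).integrableOn
    have hi2 : IntegrableOn (fun z : ℝ × ℝ => E y2 z.1 * E y1 z.2)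
        ((Set.Ioi θ₀) ×ˢ (Set.Iic θ₀)) (μ.prod μ) :=
      ((integrable_E ν μ hint n y2).mul_prod (integrable_E ν μ hint n y1)).integrableOn
    have hdiff : 0 < ∫ z in (Set.Ioi θ₀) ×ˢ (Set.Iic θ₀),
        (E y2 z.1 * E y1 z.2 - E y1 z.1 * E y2 z.2) ∂(μ.prod μ) := by
      have hi3 : IntegrableOn (fun z : ℝ × ℝ => E y2 z.1 * E y1 z.2 - E y1 z.1 * E y2 z.2)
          ((Set.Ioi θ₀) ×ˢ (Set.Iic θ₀)) (μ.prod μ) := hi2.sub hi1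
      rw [setIntegral_pos_iff_support_of_nonneg_ae ?h1 hi3]
      case h1 =>
        rw [Filter.EventuallyLE, ae_restrict_iff' (measurableSet_Ioi.prod measurableSet_Iic)]
        filter_upwards with z hz
        obtain ⟨hz1, hz2⟩ := hz
        simp only [Pi.zero_apply, sub_nonneg, hE]
        rw [← Real.exp_add, ← Real.exp_add]
        apply Real.exp_le_exp.mpr
        nlinarith [lt_of_le_of_lt (Set.mem_Iic.mp hz2) (Set.mem_Ioi.mp hz1), hy]
      · have hsub : (Set.Ioi θ₀) ×ˢ (Set.Iic θ₀) ⊆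
            Function.support (fun z : ℝ × ℝ => E y2 z.1 * E y1 z.2 - E y1 z.1 * E y2 z.2) := by
          intro z hz
          obtain ⟨hz1, hz2⟩ := hz
          have huv : z.2 < z.1 := lt_of_le_of_lt (Set.mem_Iic.mp hz2) (Set.mem_Ioi.mp hz1)
          simp only [Function.mem_support, hE]
          rw [← Real.exp_add, ← Real.exp_add]
          have : z.1 * y1 - ↑n * cgf ν z.1 + (z.2 * y2 - ↑n * cgf ν z.2)
              < z.1 * y2 - ↑n * cgf ν z.1 + (z.2 * y1 - ↑n * cgf ν z.2) := by nlinarith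
          have := Real.exp_lt_exp.mpr this
          intro hcon
          rw [sub_eq_zero] at hcon
          exact absurd hcon.symm (ne_of_lt this)
        have : (Set.Ioi θ₀) ×ˢ (Set.Iic θ₀) ⊆
            Function.support (fun z : ℝ × ℝ => E y2 z.1 * E y1 z.2 - E y1 z.1 * E y2 z.2)
            ∩ (Set.Ioi θ₀) ×ˢ (Set.Iic θ₀) := Set.subset_inter hsub subset_rfl
        calc (0 : ENNReal) < μ (Set.Ioi θ₀) * μ (Set.Iic θ₀) := by
              exact ENNReal.mul_pos (ne_of_gt h0) (ne_of_gt (Iic_pos μ θ₀ h1))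
          _ = (μ.prod μ) ((Set.Ioi θ₀) ×ˢ (Set.Iic θ₀)) := (Measure.prod_prod _ _).symm
          _ ≤ _ := measure_mono this
    have := integral_sub hi2 hi1
    rw [this] at hdiff
    linarith
  -- conclude
  have hZ1 := Z_pos ν μ hint n y1
  have hZ2 := Z_pos ν μ hint n y2
  rw [q, q, div_lt_div_iff₀ hZ1 hZ2, hZsplit y1, hZsplit y2]
  show N y1 * (N y2 + M y2) < N y2 * (N y1 + M y1)
  nlinarith [hkey]
lemma msupport_ae : ∀ᵐ u ∂μ, u ∈ msupport μ := by
  rw [ae_iff]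
  apply measure_null_of_locally_null
  intro x hx
  simp only [msupport, Set.mem_setOf_eq, not_forall] at hx
  obtain ⟨U, hU, hU0⟩ := hx
  push_neg at hU0
  exact ⟨U, nhdsWithin_le_nhds hU, hU0⟩

include hint in
lemma integrable_Zshift
    (hsupp : msupport μ ⊆ interior (expDom ν))
    (n : ℕ) (y : ℝ) :
    Integrable (fun x => Z ν μ (n + 1) (y + x)) ν := by
  rcases eq_or_ne ν 0 with hν | hν
  · rw [hν]; exact integrable_zero_measure
  have hνuniv : ν Set.univ ≠ 0 := by
    simpa [Measure.measure_univ_eq_zero] using hν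
  -- a.e. u : exp (u * ·) is ν-integrable and ∫ exp(u x) = exp (cgf ν u)
  have hae : ∀ᵐ u ∂μ, Integrable (fun x => Real.exp (u * x)) ν ∧
      (∫ x, Real.exp (u * x) ∂ν) = Real.exp (cgf ν u) := by
    filter_upwards [msupport_ae μ] with u hu
    have hu2 : u ∈ expDom ν := interior_subset (hsupp hu)
    refine ⟨hu2, ?_⟩
    have hpos : 0 < ∫ x, Real.exp (u * x) ∂ν := by
      rw [integral_pos_iff_support_of_nonneg (fun x => (Real.exp_pos _).le) hu2]
      have : (Function.support fun x : ℝ => Real.exp (u * x)) = Set.univ := by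
        ext x; simp [Function.support, (Real.exp_pos _).ne']
      rw [this]
      exact lt_of_le_of_ne zero_le (Ne.symm hνuniv)
    rw [cgf, Real.exp_log hpos]
  constructor
  · exact ((measurable_Z ν μ (n+1)).comp (measurable_const_add y)).aestronglyMeasurable
  · rw [hasFiniteIntegral_iff_ofReal (Filter.Eventually.of_forall
      (fun x => (Z_pos ν μ hint (n+1) (y+x)).le))]
    have hrw : ∀ x : ℝ, ENNReal.ofReal (Z ν μ (n+1) (y+x))
        = ∫⁻ u, ENNReal.ofReal (Real.exp (u * (y + x) - ((n:ℝ)+1) * cgf ν u)) ∂μ := by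
      intro x
      rw [Z]
      push_cast
      exact ofReal_integral_eq_lintegral_ofReal (by exact_mod_cast integrable_E ν μ hint (n+1) (y+x))
        (Filter.Eventually.of_forall (fun u => (Real.exp_pos _).le))
    simp only [hrw]
    have hswap : ∫⁻ x, ∫⁻ u, ENNReal.ofReal (Real.exp (u * (y + x) - ((n:ℝ)+1) * cgf ν u)) ∂μ ∂ν
        = ∫⁻ u, ∫⁻ x, ENNReal.ofReal (Real.exp (u * (y + x) - ((n:ℝ)+1) * cgf ν u)) ∂ν ∂μ := by
      apply lintegral_lintegral_swap
      apply Measurable.aemeasurable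
      apply Measurable.ennreal_ofReal
      exact ((measurable_snd.mul (measurable_const.add measurable_fst)).sub
        (measurable_const.mul ((measurable_cgf ν).comp measurable_snd))).exp
    rw [hswap]
    have hinner : ∀ᵐ u ∂μ, (∫⁻ x, ENNReal.ofReal (Real.exp (u * (y + x) - ((n:ℝ)+1) * cgf ν u)) ∂ν)
        = ENNReal.ofReal (Real.exp (u * y - (n : ℝ) * cgf ν u)) := by
      filter_upwards [hae] with u hu
      have hsplit : ∀ x : ℝ, Real.exp (u * (y + x) - ((n:ℝ)+1) * cgf ν u)
          = Real.exp (u * y - ((n:ℝ)+1) * cgf ν u) * Real.exp (u * x) := by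
        intro x; rw [← Real.exp_add]; ring_nf
      simp only [hsplit]
      have hC : (0:ℝ) ≤ Real.exp (u * y - ((n:ℝ)+1) * cgf ν u) := (Real.exp_pos _).le
      calc ∫⁻ x, ENNReal.ofReal (Real.exp (u * y - ((n:ℝ)+1) * cgf ν u) * Real.exp (u * x)) ∂ν
          = ∫⁻ x, ENNReal.ofReal (Real.exp (u * y - ((n:ℝ)+1) * cgf ν u))
              * ENNReal.ofReal (Real.exp (u * x)) ∂ν := by
            simp only [ENNReal.ofReal_mul hC]
        _ = ENNReal.ofReal (Real.exp (u * y - ((n:ℝ)+1) * cgf ν u))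
              * ∫⁻ x, ENNReal.ofReal (Real.exp (u * x)) ∂ν := by
            rw [lintegral_const_mul _ (by fun_prop : Measurable fun x : ℝ => ENNReal.ofReal (Real.exp (u * x)))]
        _ = ENNReal.ofReal (Real.exp (u * y - ((n:ℝ)+1) * cgf ν u))
              * ENNReal.ofReal (Real.exp (cgf ν u)) := by
            rw [← ofReal_integral_eq_lintegral_ofReal hu.1
              (Filter.Eventually.of_forall (fun x => (Real.exp_pos _).le)), hu.2]
        _ = ENNReal.ofReal (Real.exp (u * y - (n:ℝ) * cgf ν u)) := by
            rw [← ENNReal.ofReal_mul hC, ← Real.exp_add]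
            ring_nf
    rw [lintegral_congr_ae hinner,
      ← ofReal_integral_eq_lintegral_ofReal (integrable_E ν μ hint n y)
        (Filter.Eventually.of_forall (fun u => (Real.exp_pos _).le))]
    exact ENNReal.ofReal_lt_top

end DPPAux

/-- Auxiliary: `Gfun k m y = W k m (q m y)`. -/
noncomputable def Gfun (ν μ : Measure ℝ) (θ₀ : ℝ) (Y : ℕ → ℝ → ℝ) (c : ℝ)
    (k m : ℕ) (y : ℝ) : ℝ :=
  W ν μ θ₀ Y c k m (q ν μ θ₀ m y)

section GAux
variable (ν μ : Measure ℝ) [SigmaFinite ν] [IsProbabilityMeasure μ] (θ₀ : ℝ)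
  (Y : ℕ → ℝ → ℝ) (c : ℝ)
variable (hsupp : msupport μ ⊆ interior (expDom ν))
variable (hint : ∀ (n : ℕ) (y : ℝ),
      Integrable (fun u => (1 + |u|) * Real.exp (u * y - (n : ℝ) * cgf ν u)) μ)
variable (h0 : 0 < μ (Set.Ioi θ₀)) (h1 : μ (Set.Ioi θ₀) < 1)
variable (hY : ∀ (n : ℕ), ∀ p ∈ Set.Ioo (0 : ℝ) 1, q ν μ θ₀ n (Y n p) = p)
variable (hc : 0 < c)

lemma min_q_half (a : ℝ) : min a (1 - a) ≤ 1/2 := by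
  rcases le_total a (1/2) with h | h
  · exact (min_le_left _ _).trans h
  · exact (min_le_right _ _).trans (by linarith)

include hint h0 h1 hY in
lemma Y_inv (m : ℕ) (y : ℝ) : Y m (q ν μ θ₀ m y) = y :=
  (q_strictMono ν μ θ₀ hint h0 h1 m).injective
    (hY m _ (q_mem_Ioo ν μ θ₀ hint h0 h1 m y))

include hint h0 h1 hY in
lemma Gfun_succ (k m : ℕ) (y : ℝ) :
    Gfun ν μ θ₀ Y c (k+1) m y = min (min (q ν μ θ₀ m y) (1 - q ν μ θ₀ m y))
      (c + ∫ x, Gfun ν μ θ₀ Y c k (m+1) (y+x) *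
        (Z ν μ (m+1) (y+x) / Z ν μ m y) ∂ν) := by
  have hy := Y_inv ν μ θ₀ Y hint h0 h1 hY m y
  simp only [Gfun, W, T, hy]

include hint h0 h1 hY hc in
lemma Gfun_nonneg : ∀ k m y, 0 ≤ Gfun ν μ θ₀ Y c k m y := by
  intro k
  induction k with
  | zero =>
    intro m y
    obtain ⟨hq1, hq2⟩ := q_mem_Ioo ν μ θ₀ hint h0 h1 m y
    simp only [Gfun, W]
    exact le_min hq1.le (by linarith)
  | succ k ih =>
    intro m y
    rw [Gfun_succ ν μ θ₀ Y c hint h0 h1 hY]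
    obtain ⟨hq1, hq2⟩ := q_mem_Ioo ν μ θ₀ hint h0 h1 m y
    refine le_min (le_min hq1.le (by linarith)) (add_nonneg hc.le (integral_nonneg fun x => ?_))
    exact mul_nonneg (ih _ _)
      (div_nonneg (Z_pos ν μ hint _ _).le (Z_pos ν μ hint _ _).le)

include hint h0 h1 hY in
lemma Gfun_le_half : ∀ k m y, Gfun ν μ θ₀ Y c k m y ≤ 1/2 := by
  intro k
  cases k with
  | zero =>
    intro m y
    simp only [Gfun, W]
    exact min_q_half _
  | succ k =>
    intro m y
    rw [Gfun_succ ν μ θ₀ Y c hint h0 h1 hY]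
    exact (min_le_left _ _).trans (min_q_half _)

include hint h0 h1 hY in
lemma measurable_Gfun : ∀ k m, Measurable (Gfun ν μ θ₀ Y c k m) := by
  intro k
  induction k with
  | zero =>
    intro m
    have heq : Gfun ν μ θ₀ Y c 0 m
        = fun y => min (q ν μ θ₀ m y) (1 - q ν μ θ₀ m y) := by
      funext y; simp only [Gfun, W]
    rw [heq]
    exact (measurable_q ν μ θ₀ m).min (measurable_const.sub (measurable_q ν μ θ₀ m))
  | succ k ih =>
    intro m
    have heq : Gfun ν μ θ₀ Y c (k+1) m
        = fun y => min (min (q ν μ θ₀ m y) (1 - q ν μ θ₀ m y))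
          (c + (∫ x, Gfun ν μ θ₀ Y c k (m+1) (y+x) * Z ν μ (m+1) (y+x) ∂ν)
            * (Z ν μ m y)⁻¹) := by
      funext y
      rw [Gfun_succ ν μ θ₀ Y c hint h0 h1 hY]
      congr 2
      rw [← integral_mul_const]
      congr 1
      funext x
      ring
    rw [heq]
    refine Measurable.min ((measurable_q ν μ θ₀ m).min
      (measurable_const.sub (measurable_q ν μ θ₀ m)))
      (measurable_const.add (Measurable.mul ?_ (measurable_Z ν μ m).inv))
    have hSM : StronglyMeasurable (fun z : ℝ × ℝ =>
        Gfun ν μ θ₀ Y c k (m+1) (z.1 + z.2) * Z ν μ (m+1) (z.1 + z.2)) :=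
      (((ih (m+1)).mul (measurable_Z ν μ (m+1))).comp measurable_add).stronglyMeasurable
    exact hSM.integral_prod_right'.measurable

include hsupp hint h0 h1 hY hc in
lemma integrable_Gmul (k m : ℕ) (y : ℝ) :
    Integrable (fun x => Gfun ν μ θ₀ Y c k (m+1) (y+x) *
      (Z ν μ (m+1) (y+x) / Z ν μ m y)) ν := by
  refine Integrable.mono'
    (((integrable_Zshift ν μ hint hsupp m y).div_const (Z ν μ m y)).const_mul (1/2)) ?_ ?_
  · exact (((measurable_Gfun ν μ θ₀ Y c hint h0 h1 hY k (m+1)).comp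
      (measurable_const_add y)).mul
      (((measurable_Z ν μ (m+1)).comp (measurable_const_add y)).div_const _)).aestronglyMeasurable
  · filter_upwards with x
    have hw : 0 ≤ Z ν μ (m+1) (y+x) / Z ν μ m y :=
      div_nonneg (Z_pos ν μ hint _ _).le (Z_pos ν μ hint _ _).le
    rw [Real.norm_eq_abs, abs_of_nonneg
      (mul_nonneg (Gfun_nonneg ν μ θ₀ Y c hint h0 h1 hY hc k (m+1) (y+x)) hw)]
    exact mul_le_mul_of_nonneg_right
      (Gfun_le_half ν μ θ₀ Y c hint h0 h1 hY k (m+1) (y+x)) hw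

include hsupp hint h0 h1 hY hc in
lemma Gfun_anti : ∀ k m y, Gfun ν μ θ₀ Y c (k+1) m y ≤ Gfun ν μ θ₀ Y c k m y := by
  intro k
  induction k with
  | zero =>
    intro m y
    rw [Gfun_succ ν μ θ₀ Y c hint h0 h1 hY]
    have h0g : Gfun ν μ θ₀ Y c 0 m y
        = min (q ν μ θ₀ m y) (1 - q ν μ θ₀ m y) := by simp only [Gfun, W]
    rw [h0g]
    exact min_le_left _ _
  | succ k ih =>
    intro m y
    rw [Gfun_succ ν μ θ₀ Y c hint h0 h1 hY, Gfun_succ ν μ θ₀ Y c hint h0 h1 hY]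
    refine min_le_min le_rfl (add_le_add_right ?_ c)
    refine integral_mono
      (integrable_Gmul ν μ θ₀ Y c hsupp hint h0 h1 hY hc (k+1) m y)
      (integrable_Gmul ν μ θ₀ Y c hsupp hint h0 h1 hY hc k m y) fun x => ?_
    exact mul_le_mul_of_nonneg_right (ih (m+1) (y+x))
      (div_nonneg (Z_pos ν μ hint _ _).le (Z_pos ν μ hint _ _).le)

end GAux

/-- The value function satisfies the dynamic programming equation:
`V(n,p) = min( min(p, 1-p), c + (T_n V(n+1,·))(p) )` for every `n` and
`p ∈ (0,1)`. -/
theorem value_function_dpp (ν μ : Measure ℝ) [SigmaFinite ν]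
    [IsProbabilityMeasure μ] (θ₀ : ℝ) (Y : ℕ → ℝ → ℝ) (c : ℝ) (hc : 0 < c)
    (hsupp : msupport μ ⊆ interior (expDom ν))
    (h0 : 0 < μ (Set.Ioi θ₀)) (h1 : μ (Set.Ioi θ₀) < 1)
    (hint : ∀ (n : ℕ) (y : ℝ),
      Integrable (fun u => (1 + |u|) * Real.exp (u * y - (n : ℝ) * cgf ν u)) μ)
    (hY : ∀ (n : ℕ), ∀ p ∈ Set.Ioo (0 : ℝ) 1, q ν μ θ₀ n (Y n p) = p)
    (n : ℕ) (p : ℝ) (hp : p ∈ Set.Ioo (0 : ℝ) 1) :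
    Vfun ν μ θ₀ Y c n p =
      min (min p (1 - p)) (c + T ν μ θ₀ Y n (Vfun ν μ θ₀ Y c (n + 1)) p) := by
  classical
  have hqy : q ν μ θ₀ n (Y n p) = p := hY n p hp
  set A : ℝ := min p (1 - p) with hA
  -- the sequence of continuation values
  set a : ℕ → ℝ := fun k => ∫ x, Gfun ν μ θ₀ Y c k (n+1) (Y n p + x) *
      (Z ν μ (n+1) (Y n p + x) / Z ν μ n (Y n p)) ∂ν with ha
  have hT : ∀ k, T ν μ θ₀ Y n (W ν μ θ₀ Y c k (n+1)) p = a k := by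
    intro k; simp only [ha, T, Gfun]
  have hWsucc : ∀ k, W ν μ θ₀ Y c (k+1) n p = min A (c + a k) := by
    intro k; simp only [W, hT k, hA]
  have hW0 : W ν μ θ₀ Y c 0 n p = A := by simp only [W, hA]
  have hanti_a : ∀ k, a (k+1) ≤ a k := by
    intro k
    refine integral_mono
      (integrable_Gmul ν μ θ₀ Y c hsupp hint h0 h1 hY hc (k+1) n (Y n p))
      (integrable_Gmul ν μ θ₀ Y c hsupp hint h0 h1 hY hc k n (Y n p)) fun x => ?_
    exact mul_le_mul_of_nonneg_right
      (Gfun_anti ν μ θ₀ Y c hsupp hint h0 h1 hY hc k (n+1) (Y n p + x))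
      (div_nonneg (Z_pos ν μ hint _ _).le (Z_pos ν μ hint _ _).le)
  have ha_nonneg : ∀ k, 0 ≤ a k := by
    intro k
    refine integral_nonneg fun x => mul_nonneg
      (Gfun_nonneg ν μ θ₀ Y c hint h0 h1 hY hc k (n+1) (Y n p + x))
      (div_nonneg (Z_pos ν μ hint _ _).le (Z_pos ν μ hint _ _).le)
  have hAnti : Antitone a := antitone_nat_of_succ_le hanti_a
  have hbdd_a : BddBelow (Set.range a) := by
    refine ⟨0, ?_⟩; rintro x ⟨k, rfl⟩; exact ha_nonneg k
  have hlim_a : Tendsto a atTop (𝓝 (⨅ k, a k)) := tendsto_atTop_ciInf hAnti hbdd_a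
  -- identify T applied to the value function
  have hTV : T ν μ θ₀ Y n (Vfun ν μ θ₀ Y c (n+1)) p
      = ∫ x, (⨅ k, Gfun ν μ θ₀ Y c k (n+1) (Y n p + x)) *
        (Z ν μ (n+1) (Y n p + x) / Z ν μ n (Y n p)) ∂ν := by
    simp only [T, Vfun, Gfun]
  -- dominated convergence
  have hDCT : Tendsto a atTop (𝓝 (∫ x, (⨅ k, Gfun ν μ θ₀ Y c k (n+1) (Y n p + x)) *
      (Z ν μ (n+1) (Y n p + x) / Z ν μ n (Y n p)) ∂ν)) := by
    refine tendsto_integral_of_dominated_convergence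
      (bound := fun x => (1/2) * (Z ν μ (n+1) (Y n p + x) / Z ν μ n (Y n p)))
      (fun k => (integrable_Gmul ν μ θ₀ Y c hsupp hint h0 h1 hY hc k n
        (Y n p)).aestronglyMeasurable)
      (((integrable_Zshift ν μ hint hsupp n (Y n p)).div_const _).const_mul (1/2))
      (fun k => ?_) ?_
    · filter_upwards with x
      have hw : 0 ≤ Z ν μ (n+1) (Y n p + x) / Z ν μ n (Y n p) :=
        div_nonneg (Z_pos ν μ hint _ _).le (Z_pos ν μ hint _ _).le
      rw [Real.norm_eq_abs, abs_of_nonneg (mul_nonneg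
        (Gfun_nonneg ν μ θ₀ Y c hint h0 h1 hY hc k (n+1) (Y n p + x)) hw)]
      exact mul_le_mul_of_nonneg_right
        (Gfun_le_half ν μ θ₀ Y c hint h0 h1 hY k (n+1) (Y n p + x)) hw
    · filter_upwards with x
      have hGanti : Antitone (fun k => Gfun ν μ θ₀ Y c k (n+1) (Y n p + x)) :=
        antitone_nat_of_succ_le fun k =>
          Gfun_anti ν μ θ₀ Y c hsupp hint h0 h1 hY hc k (n+1) (Y n p + x)
      have hGbdd : BddBelow (Set.range fun k => Gfun ν μ θ₀ Y c k (n+1) (Y n p + x)) := by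
        refine ⟨0, ?_⟩; rintro r ⟨k, rfl⟩
        exact Gfun_nonneg ν μ θ₀ Y c hint h0 h1 hY hc k (n+1) (Y n p + x)
      exact (tendsto_atTop_ciInf hGanti hGbdd).mul_const _
  have hInfa : (⨅ k, a k) = T ν μ θ₀ Y n (Vfun ν μ θ₀ Y c (n+1)) p := by
    rw [hTV]; exact tendsto_nhds_unique hlim_a hDCT
  -- final computation
  have hA0 : 0 ≤ A := le_min hp.1.le (by have := hp.2; linarith)
  have hbddW : BddBelow (Set.range fun k => W ν μ θ₀ Y c k n p) := by
    refine ⟨0, ?_⟩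
    rintro r ⟨k, rfl⟩
    dsimp only
    cases k with
    | zero => rw [hW0]; exact hA0
    | succ k =>
      rw [hWsucc]
      exact le_min hA0 (add_nonneg hc.le (ha_nonneg k))
  rw [Vfun]
  apply le_antisymm
  · apply le_min
    · exact (ciInf_le hbddW 0).trans_eq hW0
    · have h1k : ∀ k, (⨅ j, W ν μ θ₀ Y c j n p) ≤ c + a k := by
        intro k
        refine (ciInf_le hbddW (k+1)).trans ?_
        rw [hWsucc]
        exact min_le_right _ _
      have h2 : (⨅ j, W ν μ θ₀ Y c j n p) - c ≤ ⨅ k, a k :=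
        le_ciInf fun k => by linarith [h1k k]
      rw [hInfa] at h2
      linarith
  · refine le_ciInf fun k => ?_
    cases k with
    | zero => rw [hW0]; exact min_le_left _ _
    | succ k =>
      rw [hWsucc]
      refine min_le_min le_rfl (add_le_add_right ?_ c)
      rw [← hInfa]
      exact ciInf_le hbdd_a k
end

section
/- Let μ be a probability measure on ℝ supported in the interior of N, let θ₀ ∈ ℝ with π := μ((θ₀,∞)) ∈ (0,1), let y ∈ ℝ, and set f(u) := e^{u y − B(u)}. Assume 0 < ∫_ℝ f(u) dμ(u) < ∞ and that ∫_{(θ₀,∞)} f(u) dμ(u) = π · ∫_ℝ f(u) dμ(u). Then for every a < θ₀: ∫_{(−∞,a]} f(u) dμ(u) ≤ μ((−∞,a]) · ∫_ℝ f(u) dμ(u), and for every b > θ₀: ∫_{(b,∞)} f(u) dμ(u) ≤ μ((b,∞)) · ∫_ℝ f(u) dμ(u). -/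
open MeasureTheory Real Set Filter

lemma integrable_exp_between {ν : Measure ℝ} {u₁ u₂ s t : ℝ}
    (h₁ : Integrable (fun x => Real.exp (u₁ * x)) ν)
    (h₂ : Integrable (fun x => Real.exp (u₂ * x)) ν)
    (hs : 0 ≤ s) (ht : 0 ≤ t) (hst : s + t = 1) :
    Integrable (fun x => Real.exp ((s * u₁ + t * u₂) * x)) ν := by
  refine (h₁.add h₂).mono' ?_ ?_
  · exact (Real.continuous_exp.comp (continuous_const.mul continuous_id)).aestronglyMeasurable
  · filter_upwards with x
    rw [Real.norm_of_nonneg (Real.exp_pos _).le]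
    rcases le_total (u₁ * x) (u₂ * x) with h | h
    · have hle : (s * u₁ + t * u₂) * x ≤ u₂ * x := by
        calc (s * u₁ + t * u₂) * x = s * (u₁ * x) + t * (u₂ * x) := by ring
          _ ≤ s * (u₂ * x) + t * (u₂ * x) :=
              add_le_add (mul_le_mul_of_nonneg_left h hs) le_rfl
          _ = u₂ * x := by linear_combination (u₂ * x) * hst
      calc Real.exp ((s * u₁ + t * u₂) * x) ≤ Real.exp (u₂ * x) := Real.exp_le_exp.2 hle
        _ ≤ _ := le_add_of_nonneg_left (Real.exp_pos _).le
    · have hle : (s * u₁ + t * u₂) * x ≤ u₁ * x := by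
        calc (s * u₁ + t * u₂) * x = s * (u₁ * x) + t * (u₂ * x) := by ring
          _ ≤ s * (u₁ * x) + t * (u₁ * x) :=
              add_le_add le_rfl (mul_le_mul_of_nonneg_left h ht)
          _ = u₁ * x := by linear_combination (u₁ * x) * hst
      calc Real.exp ((s * u₁ + t * u₂) * x) ≤ Real.exp (u₁ * x) := Real.exp_le_exp.2 hle
        _ ≤ _ := le_add_of_nonneg_right (Real.exp_pos _).le

lemma cgf_combo_le (ν : Measure ℝ) {u₁ u₂ s t : ℝ}
    (h₁ : Integrable (fun x => Real.exp (u₁ * x)) ν)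
    (h₂ : Integrable (fun x => Real.exp (u₂ * x)) ν)
    (hs : 0 < s) (ht : 0 < t) (hst : s + t = 1) :
    cgf ν (s * u₁ + t * u₂) ≤ s * cgf ν u₁ + t * cgf ν u₂ := by
  by_cases hν : ν = 0
  · simp [cgf, hν]
  have hs1 : s < 1 := by linarith
  have ht1 : t < 1 := by linarith
  have posI : ∀ u : ℝ, Integrable (fun x => Real.exp (u * x)) ν →
      0 < ∫ x, Real.exp (u * x) ∂ν := by
    intro u hu
    rw [integral_pos_iff_support_of_nonneg (fun x => (Real.exp_pos _).le) hu]
    have hsupp : Function.support (fun x => Real.exp (u * x)) = univ := by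
      ext x; simp [Function.mem_support, (Real.exp_pos (u * x)).ne']
    rw [hsupp]
    simpa [Measure.measure_univ_pos] using hν
  have conj : Real.HolderConjugate (1 / s) (1 / t) := by
    rw [Real.holderConjugate_iff]; constructor
    · exact one_lt_one_div hs hs1
    · rw [one_div, one_div, inv_inv, inv_inv]; exact hst
  have mem : ∀ u : ℝ, Integrable (fun x => Real.exp (u * x)) ν → ∀ r : ℝ, 0 < r →
      MemLp (fun x => Real.exp (u * x) ^ r) (ENNReal.ofReal (1 / r)) ν := by
    intro u hu r hr
    constructor
    · exact ((Real.continuous_exp.comp (continuous_const.mul continuous_id)).rpow_const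
        (fun x => Or.inr hr.le)).aestronglyMeasurable
    · have hnorm : (fun x => Real.exp (u * x) ^ r) = fun x => ‖Real.exp (u * x)‖ ^ r := by
        funext x; rw [Real.norm_of_nonneg (Real.exp_pos _).le]
      rw [hnorm, eLpNorm_norm_rpow _ hr]
      have h1 : ENNReal.ofReal (1 / r) * ENNReal.ofReal r = 1 := by
        rw [← ENNReal.ofReal_mul (by positivity), one_div, inv_mul_cancel₀ hr.ne',
          ENNReal.ofReal_one]
      rw [h1]
      exact ENNReal.rpow_lt_top_of_nonneg hr.le (memLp_one_iff_integrable.mpr hu).2.ne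
  have key := integral_mul_le_Lp_mul_Lq_of_nonneg (μ := ν) conj
    (f := fun x => Real.exp (u₁ * x) ^ s) (g := fun x => Real.exp (u₂ * x) ^ t)
    (Eventually.of_forall fun x => Real.rpow_nonneg (Real.exp_pos _).le s)
    (Eventually.of_forall fun x => Real.rpow_nonneg (Real.exp_pos _).le t)
    (mem u₁ h₁ s hs) (mem u₂ h₂ t ht)
  have hfg : ∀ x : ℝ, Real.exp (u₁ * x) ^ s * Real.exp (u₂ * x) ^ t
      = Real.exp ((s * u₁ + t * u₂) * x) := by
    intro x
    rw [← Real.exp_mul, ← Real.exp_mul, ← Real.exp_add]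
    congr 1; ring
  have hps : ∀ x : ℝ, (Real.exp (u₁ * x) ^ s : ℝ) ^ (1 / s) = Real.exp (u₁ * x) := by
    intro x
    rw [← Real.rpow_mul (Real.exp_pos _).le, mul_one_div, div_self hs.ne', Real.rpow_one]
  have hpt : ∀ x : ℝ, (Real.exp (u₂ * x) ^ t : ℝ) ^ (1 / t) = Real.exp (u₂ * x) := by
    intro x
    rw [← Real.rpow_mul (Real.exp_pos _).le, mul_one_div, div_self ht.ne', Real.rpow_one]
  simp only [hfg, hps, hpt, one_div_one_div] at key
  have Impos := posI _ (integrable_exp_between h₁ h₂ hs.le ht.le hst)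
  have I₁pos := posI u₁ h₁
  have I₂pos := posI u₂ h₂
  calc cgf ν (s * u₁ + t * u₂)
      ≤ Real.log ((∫ x, Real.exp (u₁ * x) ∂ν) ^ s * (∫ x, Real.exp (u₂ * x) ∂ν) ^ t) :=
        Real.log_le_log Impos key
    _ = s * cgf ν u₁ + t * cgf ν u₂ := by
        rw [Real.log_mul (Real.rpow_pos_of_pos I₁pos s).ne' (Real.rpow_pos_of_pos I₂pos t).ne',
          Real.log_rpow I₁pos, Real.log_rpow I₂pos]
        rfl

lemma superlevel_between (ν : Measure ℝ) {u₁ u u₂ y Z : ℝ}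
    (h₁ : Integrable (fun x => Real.exp (u₁ * x)) ν)
    (h₂ : Integrable (fun x => Real.exp (u₂ * x)) ν)
    (hZ : 0 < Z) (hlt1 : u₁ < u) (hlt2 : u < u₂)
    (hc1 : Z ≤ Real.exp (u₁ * y - cgf ν u₁)) (hc2 : Z ≤ Real.exp (u₂ * y - cgf ν u₂)) :
    Z ≤ Real.exp (u * y - cgf ν u) := by
  have hden : 0 < u₂ - u₁ := by linarith
  set s : ℝ := (u₂ - u) / (u₂ - u₁) with hsdef
  set t : ℝ := (u - u₁) / (u₂ - u₁) with htdef
  have hs : 0 < s := div_pos (by linarith) hden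
  have ht : 0 < t := div_pos (by linarith) hden
  have hst : s + t = 1 := by
    rw [hsdef, htdef, ← add_div, div_eq_one_iff_eq hden.ne']
    ring
  have hu : s * u₁ + t * u₂ = u := by
    rw [hsdef, htdef]; field_simp; ring
  have hcgf := cgf_combo_le ν h₁ h₂ hs ht hst
  rw [hu] at hcgf
  rw [← Real.log_le_iff_le_exp hZ] at hc1 hc2 ⊢
  have e1 : s * Real.log Z ≤ s * (u₁ * y - cgf ν u₁) := mul_le_mul_of_nonneg_left hc1 hs.le
  have e2 : t * Real.log Z ≤ t * (u₂ * y - cgf ν u₂) := mul_le_mul_of_nonneg_left hc2 ht.le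
  have huy : u * y = s * (u₁ * y) + t * (u₂ * y) := by rw [← hu]; ring
  calc Real.log Z = s * Real.log Z + t * Real.log Z := by rw [← add_mul, hst, one_mul]
    _ ≤ s * (u₁ * y - cgf ν u₁) + t * (u₂ * y - cgf ν u₂) := add_le_add e1 e2
    _ = (s * (u₁ * y) + t * (u₂ * y)) - (s * cgf ν u₁ + t * cgf ν u₂) := by ring
    _ = u * y - (s * cgf ν u₁ + t * cgf ν u₂) := by rw [← huy]
    _ ≤ u * y - cgf ν u := sub_le_sub_left hcgf _

/-- One-step concentration of the Bayesian update: if the update by the weight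
`f(u) = e^{uy - B(u)}` preserves the posterior mass `p` of `(θ₀,∞)`, then the
updated distribution assigns no more (normalized) mass to `(-∞,a]` for `a < θ₀`
and no more mass to `(b,∞)` for `b > θ₀` than `μ` does. -/
theorem one_step_concentration (ν : Measure ℝ) [SigmaFinite ν]
    (μ : Measure ℝ) [IsProbabilityMeasure μ]
    (hsupp : msupport μ ⊆ interior (expDom ν))
    (θ₀ y p : ℝ) (hp : p = (μ (Set.Ioi θ₀)).toReal) (hp0 : 0 < p) (hp1 : p < 1)
    (hfi : Integrable (fun u => Real.exp (u * y - cgf ν u)) μ)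
    (hfpos : 0 < ∫ u, Real.exp (u * y - cgf ν u) ∂μ)
    (hlevel : ∫ u in Set.Ioi θ₀, Real.exp (u * y - cgf ν u) ∂μ =
      p * ∫ u, Real.exp (u * y - cgf ν u) ∂μ) :
    (∀ a < θ₀, ∫ u in Set.Iic a, Real.exp (u * y - cgf ν u) ∂μ ≤
      (μ (Set.Iic a)).toReal * ∫ u, Real.exp (u * y - cgf ν u) ∂μ) ∧
    (∀ b > θ₀, ∫ u in Set.Ioi b, Real.exp (u * y - cgf ν u) ∂μ ≤
      (μ (Set.Ioi b)).toReal * ∫ u, Real.exp (u * y - cgf ν u) ∂μ) := by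
  set F : ℝ → ℝ := fun u => Real.exp (u * y - cgf ν u) with hF
  set Z : ℝ := ∫ u, F u ∂μ with hZdef
  set D : Set ℝ := interior (expDom ν) with hD
  have hZ : 0 < Z := hfpos
  -- the complement of D is null
  have hDnull : ∀ᵐ u ∂μ, u ∈ D := by
    rw [ae_iff]
    apply measure_null_of_locally_null
    intro x hx
    have hxs : x ∉ msupport μ := fun hmem => hx (hsupp hmem)
    simp only [msupport, mem_setOf_eq, not_forall] at hxs
    obtain ⟨U, hU, hU0⟩ := hxs
    push_neg at hU0
    exact ⟨U, nhdsWithin_le_nhds hU, hU0⟩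
  -- splitting at θ₀
  have hIicθ : ∫ u in Set.Iic θ₀, F u ∂μ = (1 - p) * Z := by
    have h := integral_add_compl (measurableSet_Ioi (a := θ₀)) hfi
    rw [Set.compl_Ioi] at h
    linear_combination h - hlevel
  have hμIicθ : (μ (Set.Iic θ₀)).toReal = 1 - p := by
    have h1 : μ (Set.Iic θ₀) + μ (Set.Ioi θ₀) = 1 := by
      rw [← measure_union (Set.Iic_disjoint_Ioi le_rfl) measurableSet_Ioi, Set.Iic_union_Ioi,
        measure_univ]
    have h2 : (μ (Set.Iic θ₀)).toReal + (μ (Set.Ioi θ₀)).toReal = 1 := by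
      rw [← ENNReal.toReal_add (measure_ne_top μ _) (measure_ne_top μ _), h1, ENNReal.toReal_one]
    rw [hp]; linarith
  have hconst : ∀ s : Set ℝ, IntegrableOn (fun _ : ℝ => Z) s μ := fun s =>
    integrableOn_const (measure_ne_top μ _)
  constructor
  · intro a ha
    by_cases hA : ∃ u₂ ∈ D, θ₀ < u₂ ∧ Z ≤ F u₂
    · by_cases hB : ∃ u₁ ∈ D, u₁ ≤ a ∧ Z ≤ F u₁
      · obtain ⟨u₂, hu₂D, hu₂θ, hu₂Z⟩ := hA
        obtain ⟨u₁, hu₁D, hu₁a, hu₁Z⟩ := hB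
        have h₁m : u₁ ∈ expDom ν := interior_subset hu₁D
        have h₂m : u₂ ∈ expDom ν := interior_subset hu₂D
        have h₁i : Integrable (fun x => Real.exp (u₁ * x)) ν := h₁m
        have h₂i : Integrable (fun x => Real.exp (u₂ * x)) ν := h₂m
        have hbound : ∀ u ∈ Set.Ioc a θ₀, Z ≤ F u := by
          intro u hu
          exact superlevel_between ν h₁i h₂i hZ (lt_of_le_of_lt hu₁a hu.1)
            (lt_of_le_of_lt hu.2 hu₂θ) hu₁Z hu₂Z
        have hsplitI : ∫ u in Set.Iic a, F u ∂μ + ∫ u in Set.Ioc a θ₀, F u ∂μ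
            = ∫ u in Set.Iic θ₀, F u ∂μ := by
          rw [← setIntegral_union (Set.Iic_disjoint_Ioc le_rfl) measurableSet_Ioc
            hfi.integrableOn hfi.integrableOn, Set.Iic_union_Ioc_eq_Iic ha.le]
        have hsplitM : (μ (Set.Iic a)).toReal + (μ (Set.Ioc a θ₀)).toReal
            = (μ (Set.Iic θ₀)).toReal := by
          rw [← ENNReal.toReal_add (measure_ne_top μ _) (measure_ne_top μ _),
            ← measure_union (Set.Iic_disjoint_Ioc le_rfl) measurableSet_Ioc,
            Set.Iic_union_Ioc_eq_Iic ha.le]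
        have hlow : (μ (Set.Ioc a θ₀)).toReal * Z ≤ ∫ u in Set.Ioc a θ₀, F u ∂μ := by
          have h := setIntegral_mono_on (hconst _) hfi.integrableOn measurableSet_Ioc hbound
          simpa [setIntegral_const, smul_eq_mul, measureReal_def] using h
        calc ∫ u in Set.Iic a, F u ∂μ
            = (1 - p) * Z - ∫ u in Set.Ioc a θ₀, F u ∂μ := by linarith [hsplitI, hIicθ]
          _ ≤ (1 - p) * Z - (μ (Set.Ioc a θ₀)).toReal * Z := by linarith [hlow]
          _ = (μ (Set.Iic a)).toReal * Z := by rw [← hμIicθ, ← hsplitM]; ring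
      · push_neg at hB
        have h := setIntegral_mono_ae_restrict (μ := μ) (s := Set.Iic a)
          hfi.integrableOn (hconst _) ?_
        · simpa [setIntegral_const, smul_eq_mul, measureReal_def] using h
        · filter_upwards [ae_restrict_of_ae hDnull, ae_restrict_mem measurableSet_Iic]
            with u hu1 hu2
          exact (hB u hu1 hu2).le
    · exfalso
      push_neg at hA
      have hae : ∀ᵐ u ∂μ.restrict (Set.Ioi θ₀), F u < Z := by
        filter_upwards [ae_restrict_of_ae hDnull, ae_restrict_mem measurableSet_Ioi]
          with u hu1 hu2
        exact hA u hu1 hu2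
      have hzero : ∫ u in Set.Ioi θ₀, (Z - F u) ∂μ = 0 := by
        rw [integral_sub (hconst _) hfi.integrableOn, setIntegral_const, smul_eq_mul, hlevel,
          measureReal_def, ← hp]
        ring
      have heq := (integral_eq_zero_iff_of_nonneg_ae (μ := μ.restrict (Set.Ioi θ₀))
        (f := fun u => Z - F u) (hae.mono fun u hu => by simp; linarith)
        ((hconst _).sub hfi.integrableOn)).mp hzero
      have hfalse : ∀ᵐ u ∂μ.restrict (Set.Ioi θ₀), False := by
        filter_upwards [hae, heq] with u h1 h2
        simp only [Pi.zero_apply] at h2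
        linarith
      have h0 : μ (Set.Ioi θ₀) = 0 := by
        rw [← Measure.restrict_eq_zero, ← ae_eq_bot, ← eventually_false_iff_eq_bot]
        exact hfalse
      rw [hp, h0] at hp0
      simp at hp0
  · intro b hb
    by_cases hA : ∃ u₁ ∈ D, u₁ ≤ θ₀ ∧ Z ≤ F u₁
    · by_cases hB : ∃ u₂ ∈ D, b < u₂ ∧ Z ≤ F u₂
      · obtain ⟨u₁, hu₁D, hu₁θ, hu₁Z⟩ := hA
        obtain ⟨u₂, hu₂D, hu₂b, hu₂Z⟩ := hB
        have h₁m : u₁ ∈ expDom ν := interior_subset hu₁D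
        have h₂m : u₂ ∈ expDom ν := interior_subset hu₂D
        have h₁i : Integrable (fun x => Real.exp (u₁ * x)) ν := h₁m
        have h₂i : Integrable (fun x => Real.exp (u₂ * x)) ν := h₂m
        have hbound : ∀ u ∈ Set.Ioc θ₀ b, Z ≤ F u := by
          intro u hu
          exact superlevel_between ν h₁i h₂i hZ (lt_of_le_of_lt hu₁θ hu.1)
            (lt_of_le_of_lt hu.2 hu₂b) hu₁Z hu₂Z
        have hsplitI : ∫ u in Set.Ioc θ₀ b, F u ∂μ + ∫ u in Set.Ioi b, F u ∂μ
            = ∫ u in Set.Ioi θ₀, F u ∂μ := by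
          rw [← setIntegral_union (Set.Ioc_disjoint_Ioi le_rfl) measurableSet_Ioi
            hfi.integrableOn hfi.integrableOn, Set.Ioc_union_Ioi_eq_Ioi hb.le]
        have hsplitM : (μ (Set.Ioc θ₀ b)).toReal + (μ (Set.Ioi b)).toReal
            = (μ (Set.Ioi θ₀)).toReal := by
          rw [← ENNReal.toReal_add (measure_ne_top μ _) (measure_ne_top μ _),
            ← measure_union (Set.Ioc_disjoint_Ioi le_rfl) measurableSet_Ioi,
            Set.Ioc_union_Ioi_eq_Ioi hb.le]
        have hlow : (μ (Set.Ioc θ₀ b)).toReal * Z ≤ ∫ u in Set.Ioc θ₀ b, F u ∂μ := by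
          have h := setIntegral_mono_on (hconst _) hfi.integrableOn measurableSet_Ioc hbound
          simpa [setIntegral_const, smul_eq_mul, measureReal_def] using h
        calc ∫ u in Set.Ioi b, F u ∂μ
            = p * Z - ∫ u in Set.Ioc θ₀ b, F u ∂μ := by linarith [hsplitI, hlevel]
          _ ≤ p * Z - (μ (Set.Ioc θ₀ b)).toReal * Z := by linarith [hlow]
          _ = (μ (Set.Ioi b)).toReal * Z := by rw [hp, ← hsplitM]; ring
      · push_neg at hB
        have h := setIntegral_mono_ae_restrict (μ := μ) (s := Set.Ioi b)
          hfi.integrableOn (hconst _) ?_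
        · simpa [setIntegral_const, smul_eq_mul, measureReal_def] using h
        · filter_upwards [ae_restrict_of_ae hDnull, ae_restrict_mem measurableSet_Ioi]
            with u hu1 hu2
          exact (hB u hu1 hu2).le
    · exfalso
      push_neg at hA
      have hae : ∀ᵐ u ∂μ.restrict (Set.Iic θ₀), F u < Z := by
        filter_upwards [ae_restrict_of_ae hDnull, ae_restrict_mem measurableSet_Iic]
          with u hu1 hu2
        exact hA u hu1 hu2
      have hzero : ∫ u in Set.Iic θ₀, (Z - F u) ∂μ = 0 := by
        rw [integral_sub (hconst _) hfi.integrableOn, setIntegral_const, smul_eq_mul, hIicθ,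
          measureReal_def, hμIicθ]
        ring
      have heq := (integral_eq_zero_iff_of_nonneg_ae (μ := μ.restrict (Set.Iic θ₀))
        (f := fun u => Z - F u) (hae.mono fun u hu => by simp; linarith)
        ((hconst _).sub hfi.integrableOn)).mp hzero
      have hfalse : ∀ᵐ u ∂μ.restrict (Set.Iic θ₀), False := by
        filter_upwards [hae, heq] with u h1 h2
        simp only [Pi.zero_apply] at h2
        linarith
      have h0 : μ (Set.Iic θ₀) = 0 := by
        rw [← Measure.restrict_eq_zero, ← ae_eq_bot, ← eventually_false_iff_eq_bot]
        exact hfalse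
      rw [h0] at hμIicθ
      simp at hμIicθ
      linarith
end
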